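/- arXiv:2001.07422 — 4 statements merged into one kernel-verified Lean document; each statement's English description precedes it below -/
import Mathlib

section
/- Let d ≥ 3 and α ∈ (0,2). Let μ be a bounded probability density on ℝ^d and let (P_u)_{u>0} be a family of Markov kernels on ℝ^d such that: (i) the measure μ(x)dx is invariant for every P_u; (ii) ‖P_u f‖_{L²(μ)} ≤ ‖f‖_{L²(μ)} for every f ∈ L²(μ) and u > 0; (iii) for every u ∈ (0,1], P_u(x,·) has a density p_u(x,·) with respect to Lebesgue measure satisfying p_u(x,y) ≤ c₀ (u^{−d/2} e^{−λ₀|y−x|²/u} + u/(u^{1/2} + |y−x|)^{d+α}) for all x, y, with constants c₀, λ₀ > 0; (iv) for every u ≥ 1, P_u(x,·) has a density bounded by a constant c₀′; (v) there exist c > 0, ρ > 0 such that ∫_{ℝ^d} |P_u g(x) − ∫ g μ dx| μ(x) dx ≤ c e^{−ρu} ‖g‖_∞ for every bounded measurable g and u > 0. Then there is a constant C, independent of f and T, such that for every T > 0 and every bounded measurable f : ℝ^d → ℝ whose support S has Lebesgue measure |S| < 1: 2 ∫_0^T (T−u) |⟨P_u f, f⟩_μ − (∫ f μ dx)²| du ≤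 C T ‖f‖_∞² |S|^{1+2/d}. -/
/-!
Write `F u = ⟨P_u f, f⟩_μ`, `m = ∫ f μ` and `s = |supp f|`. Since `f` vanishes off its support,
`|F u| ≤ ‖P_u f‖_∞ ‖f‖_∞ Cμ s` and `|m| ≤ ‖f‖_∞ Cμ s`. The density bounds give
`‖P_u f‖_∞ ≤ 2 c₀ u^{-d/2} ‖f‖_∞ s` for `u ≤ 1` and `‖P_u f‖_∞ ≤ c₀' ‖f‖_∞ s` for `u ≥ 1`, while
ergodicity gives `|F u - m²| ≤ c e^{-ρu} ‖f‖_∞²`. Because `d > 2`, `min 1 (s u^{-d/2})` has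
integral `O(s^{2/d})` over `(0, ∞)`; for `u ≥ 1` the interpolation
`min (e^{-ρu}) s² ≤ e^{-θρu} s^{2(1-θ)}` with `θ = 1/2 - 1/d` produces the exponent `1 + 2/d`.
Finally `T - u ≤ T` under the time integral.
-/

open MeasureTheory ProbabilityTheory Real Set Function

lemma min_le_rpow_mul_rpow {a b θ : ℝ} (ha : 0 ≤ a) (hb : 0 ≤ b) (hθ₀ : 0 ≤ θ) (hθ₁ : θ ≤ 1) :
    min a b ≤ a ^ θ * b ^ (1 - θ) := by
  have h₀ : 0 ≤ min a b := le_min ha hb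
  calc min a b = min a b ^ θ * min a b ^ (1 - θ) := by
        rw [← rpow_add' h₀ (by norm_num), add_sub_cancel, rpow_one]
    _ ≤ a ^ θ * b ^ (1 - θ) := by
        gcongr ?_ * ?_
        · exact rpow_le_rpow h₀ (min_le_left a b) hθ₀
        · exact rpow_le_rpow h₀ (min_le_right a b) (sub_nonneg.2 hθ₁)

lemma min_mul_exp_le {c D s ρ u θ : ℝ} (hc : 0 ≤ c) (hD : 0 ≤ D) (hs : 0 ≤ s) (hθ₀ : 0 ≤ θ)
    (hθ₁ : θ ≤ 1) :
    min (c * exp (-ρ * u)) (D * s ^ 2) ≤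
      c ^ θ * D ^ (1 - θ) * s ^ (2 * (1 - θ)) * exp (-(θ * ρ) * u) := by
  refine (min_le_rpow_mul_rpow (by positivity) (by positivity) hθ₀ hθ₁).trans_eq ?_
  rw [mul_rpow hc (exp_pos _).le, mul_rpow hD (sq_nonneg s), ← exp_mul, ← rpow_two,
    ← rpow_mul hs]
  ring_nf

lemma integrableOn_min_one_mul_rpow_neg {A q : ℝ} (hA : 0 ≤ A) (hq : 1 < q) :
    IntegrableOn (fun u : ℝ => min 1 (A * u ^ (-q))) (Ioi 0) := by
  have hmeas : Measurable fun u : ℝ => min 1 (A * u ^ (-q)) := by fun_prop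
  rw [← Ioc_union_Ioi_eq_Ioi (zero_le_one (α := ℝ))]
  refine IntegrableOn.union ?_ ?_
  · refine Integrable.mono' (g := fun _ => 1) (integrableOn_const measure_Ioc_lt_top.ne)
      hmeas.aestronglyMeasurable
      ((ae_restrict_iff' measurableSet_Ioc).2 (ae_of_all _ fun u hu => ?_))
    rw [norm_of_nonneg (le_min zero_le_one (by have := hu.1; positivity))]
    exact min_le_left _ _
  · refine Integrable.mono'
      ((integrableOn_Ioi_rpow_of_lt (a := -q) (by linarith) one_pos).const_mul A)
      hmeas.aestronglyMeasurable
      ((ae_restrict_iff' measurableSet_Ioi).2 (ae_of_all _ fun u hu => ?_))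
    have hu : (0 : ℝ) < u := zero_lt_one.trans hu
    rw [norm_of_nonneg (le_min zero_le_one (by positivity))]
    exact min_le_right _ _

lemma integral_min_one_mul_rpow_neg_le {A q : ℝ} (hA : 0 ≤ A) (hq : 1 < q) :
    ∫ u in Ioi 0, min 1 (A * u ^ (-q)) ≤ q / (q - 1) * A ^ q⁻¹ := by
  rcases hA.eq_or_lt with rfl | hA
  · simpa using mul_nonneg (div_nonneg (by linarith) (by linarith)) (rpow_nonneg le_rfl q⁻¹)
  set t := A ^ q⁻¹
  have ht : 0 < t := rpow_pos_of_pos hA _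
  have hint := integrableOn_min_one_mul_rpow_neg hA.le hq
  rw [← Ioc_union_Ioi_eq_Ioi ht.le, setIntegral_union (Ioc_disjoint_Ioi le_rfl) measurableSet_Ioi
    (hint.mono_set Ioc_subset_Ioi_self) (hint.mono_set (Ioi_subset_Ioi ht.le))]
  have h₁ : ∫ u in Ioc 0 t, min 1 (A * u ^ (-q)) ≤ t := by
    refine (setIntegral_mono_on (hint.mono_set Ioc_subset_Ioi_self)
      (integrableOn_const measure_Ioc_lt_top.ne) measurableSet_Ioc
      fun _ _ => min_le_left _ _).trans_eq ?_
    simp [ht.le]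
  have h₂ : ∫ u in Ioi t, min 1 (A * u ^ (-q)) ≤ t / (q - 1) := by
    have hpow := integrableOn_Ioi_rpow_of_lt (neg_lt_neg hq) ht
    calc ∫ u in Ioi t, min 1 (A * u ^ (-q)) ≤ ∫ u in Ioi t, A * u ^ (-q) :=
          setIntegral_mono_on (hint.mono_set (Ioi_subset_Ioi ht.le)) (hpow.const_mul A)
            measurableSet_Ioi fun _ _ => min_le_right _ _
      _ = A * t ^ (-q + 1) / (q - 1) := by
          rw [integral_const_mul, integral_Ioi_rpow_of_lt (neg_lt_neg hq) ht]
          have : -q + 1 ≠ 0 := by linarith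
          have : q - 1 ≠ 0 := by linarith
          field_simp
          ring
      _ = t / (q - 1) := by
          rw [show A = t ^ q from (rpow_inv_rpow hA.le (by positivity)).symm, ← rpow_add ht]
          simp
  calc _ ≤ t + t / (q - 1) := add_le_add h₁ h₂
    _ = q / (q - 1) * t := by field_simp [(sub_pos.2 hq).ne']; ring

lemma integral_exp_neg_mul_Ioi_zero {b : ℝ} (hb : 0 < b) :
    ∫ u in Ioi 0, exp (-b * u) = 1 / b := by
  rw [integral_exp_mul_Ioi (neg_neg_of_pos hb)]
  field_simp
  simp

lemma setIntegral_Icc_sub_mul_le {ψ G : ℝ → ℝ} {T : ℝ} (hT : 0 ≤ T) (hψ : ∀ u, 0 ≤ ψ u)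
    (hψG : ∀ u, 0 < u → ψ u ≤ G u) (hG : IntegrableOn G (Ioi 0)) :
    ∫ u in Icc 0 T, (T - u) * ψ u ≤ T * ∫ u in Ioi 0, G u := by
  have hG₀ : ∀ u ∈ Ioi (0 : ℝ), 0 ≤ G u := fun u hu => (hψ u).trans (hψG u hu)
  rw [integral_Icc_eq_integral_Ioc]
  calc ∫ u in Ioc 0 T, (T - u) * ψ u ≤ ∫ u in Ioc 0 T, T * G u :=
        setIntegral_mono_of_nonneg (fun u hu => mul_nonneg (sub_nonneg.2 hu.2) (hψ u))
          (fun u hu => mul_le_mul (by linarith [hu.1]) (hψG u hu.1) (hψ u) hT)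
          ((hG.mono_set Ioc_subset_Ioi_self).const_mul T)
    _ = T * ∫ u in Ioc 0 T, G u := integral_const_mul T _
    _ ≤ T * ∫ u in Ioi 0, G u := by
        refine mul_le_mul_of_nonneg_left ?_ hT
        exact setIntegral_mono_set hG ((ae_restrict_iff' measurableSet_Ioi).2 (ae_of_all _ hG₀))
          Ioc_subset_Ioi_self.eventuallyLE

/- The middle term dominates `B * s ^ 2` on `(0, 1]`, where `exp ρ * exp (-ρ * u) ≥ 1`, and is
still integrable on `(0, ∞)`. -/
noncomputable def covarianceMajorant (d A K B E ρ θ s u : ℝ) : ℝ :=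
  A * s * min 1 (K * s * u ^ (-(d / 2))) + B * s ^ 2 * exp ρ * exp (-ρ * u)
    + E * s ^ (1 + 2 / d) * exp (-(θ * ρ) * u)

section CovarianceMajorant

variable {d A K B E ρ θ s : ℝ}

lemma integrableOn_covarianceMajorant (hd : 2 < d) (hK : 0 ≤ K) (hs : 0 ≤ s) (hρ : 0 < ρ)
    (hθ : 0 < θ) : IntegrableOn (covarianceMajorant d A K B E ρ θ s) (Ioi 0) :=
  (((integrableOn_min_one_mul_rpow_neg (mul_nonneg hK hs) (by linarith)).const_mul (A * s)).add
    ((exp_neg_integrableOn_Ioi 0 hρ).const_mul _)).add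
    ((exp_neg_integrableOn_Ioi 0 (mul_pos hθ hρ)).const_mul _)

lemma integral_covarianceMajorant_le (hd : 2 < d) (hA : 0 ≤ A) (hK : 0 ≤ K) (hB : 0 ≤ B)
    (hs₀ : 0 ≤ s) (hs₁ : s ≤ 1) (hρ : 0 < ρ) (hθ : 0 < θ) :
    ∫ u in Ioi 0, covarianceMajorant d A K B E ρ θ s u ≤
      (A * (d / 2 / (d / 2 - 1) * K ^ (2 / d)) + B * exp ρ / ρ + E / (θ * ρ)) *
        s ^ (1 + 2 / d) := by
  have hq : 1 < d / 2 := by linarith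
  have hi₁ := (integrableOn_min_one_mul_rpow_neg (mul_nonneg hK hs₀) hq).const_mul (A * s)
  have hi₂ := (exp_neg_integrableOn_Ioi 0 hρ).const_mul (B * s ^ 2 * exp ρ)
  have hi₃ := (exp_neg_integrableOn_Ioi 0 (mul_pos hθ hρ)).const_mul (E * s ^ (1 + 2 / d))
  have hsplit : ∫ u in Ioi 0, covarianceMajorant d A K B E ρ θ s u =
      (∫ u in Ioi 0, A * s * min 1 (K * s * u ^ (-(d / 2))))
        + (∫ u in Ioi 0, B * s ^ 2 * exp ρ * exp (-ρ * u))
        + ∫ u in Ioi 0, E * s ^ (1 + 2 / d) * exp (-(θ * ρ) * u) :=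
    (integral_add (hi₁.add hi₂) hi₃).trans (congrArg (· + _) (integral_add hi₁ hi₂))
  have hmin : ∫ u in Ioi 0, min 1 (K * s * u ^ (-(d / 2))) ≤
      d / 2 / (d / 2 - 1) * K ^ (2 / d) * s ^ (2 / d) := by
    refine (integral_min_one_mul_rpow_neg_le (mul_nonneg hK hs₀) hq).trans_eq ?_
    rw [inv_div, mul_rpow hK hs₀, mul_assoc]
  have hs : s * s ^ (2 / d) = s ^ (1 + 2 / d) := (rpow_one_add' hs₀ (by positivity)).symm
  have hs₂ : s ^ 2 ≤ s ^ (1 + 2 / d) := by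
    have : 2 / d < 1 := by rw [div_lt_one (by linarith)]; linarith
    rw [← rpow_two]
    exact rpow_le_rpow_of_exponent_ge' hs₀ hs₁ (by positivity) (by linarith)
  rw [hsplit, integral_const_mul, integral_const_mul, integral_const_mul,
    integral_exp_neg_mul_Ioi_zero hρ, integral_exp_neg_mul_Ioi_zero (mul_pos hθ hρ)]
  calc A * s * (∫ u in Ioi 0, min 1 (K * s * u ^ (-(d / 2))))
        + B * s ^ 2 * exp ρ * (1 / ρ) + E * s ^ (1 + 2 / d) * (1 / (θ * ρ))
      ≤ A * s * (d / 2 / (d / 2 - 1) * K ^ (2 / d) * s ^ (2 / d))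
        + B * s ^ (1 + 2 / d) * exp ρ * (1 / ρ) + E * s ^ (1 + 2 / d) * (1 / (θ * ρ)) := by
        gcongr
    _ = _ := by rw [← hs]; ring

end CovarianceMajorant

theorem exists_setIntegral_Icc_sub_mul_le {d A K B D c ρ : ℝ} (hd : 2 < d) (hA : 0 ≤ A) (hK : 0 ≤ K)
    (hB : 0 ≤ B) (hD : 0 ≤ D) (hc : 0 ≤ c) (hρ : 0 < ρ) :
    ∃ C, ∀ (ψ : ℝ → ℝ) (M s T : ℝ), 0 ≤ M → 0 ≤ s → s ≤ 1 → 0 ≤ T → (∀ u, 0 ≤ ψ u) →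
      (∀ u ∈ Ioc (0 : ℝ) 1, ψ u ≤ M * (A * s * min 1 (K * s * u ^ (-(d / 2))) + B * s ^ 2)) →
      (∀ u, 1 < u → ψ u ≤ M * (D * s ^ 2)) →
      (∀ u, 0 < u → ψ u ≤ M * (c * exp (-ρ * u))) →
      ∫ u in Icc 0 T, (T - u) * ψ u ≤ C * T * M * s ^ (1 + 2 / d) := by
  set θ := 1 / 2 - 1 / d with hθ
  have hd₁ : 1 / d < 1 / 2 := one_div_lt_one_div_of_lt two_pos hd
  have hθ₀ : 0 < θ := by linarith
  have hθ₁ : θ ≤ 1 := by linarith [one_div_pos.2 (zero_lt_two.trans hd)]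
  set E := c ^ θ * D ^ (1 - θ)
  refine ⟨A * (d / 2 / (d / 2 - 1) * K ^ (2 / d)) + B * exp ρ / ρ + E / (θ * ρ),
    fun ψ M s T hM hs₀ hs₁ hT hψ h_small h_large h_erg => ?_⟩
  have hg : ∀ u, 0 < u → ψ u ≤ M * covarianceMajorant d A K B E ρ θ s u := by
    intro u hu
    have h₁ : 0 ≤ A * s * min 1 (K * s * u ^ (-(d / 2))) := by positivity
    have h₂ : 0 ≤ B * s ^ 2 * exp ρ * exp (-ρ * u) := by positivity
    have h₃ : 0 ≤ E * s ^ (1 + 2 / d) * exp (-(θ * ρ) * u) := by positivity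
    unfold covarianceMajorant
    rcases le_or_gt u 1 with hu₁ | hu₁
    · have : 1 ≤ exp ρ * exp (-ρ * u) := by
        rw [← exp_add]; exact one_le_exp (by nlinarith)
      refine (h_small u ⟨hu, hu₁⟩).trans (mul_le_mul_of_nonneg_left ?_ hM)
      nlinarith [mul_nonneg hB (sq_nonneg s)]
    · have := min_mul_exp_le (ρ := ρ) (u := u) hc hD hs₀ hθ₀.le hθ₁
      rw [show 2 * (1 - θ) = 1 + 2 / d by rw [hθ]; ring] at this
      refine (le_min (h_erg u hu) (h_large u hu₁)).trans ?_
      rw [← mul_min_of_nonneg _ _ hM]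
      exact mul_le_mul_of_nonneg_left (by linarith) hM
  calc ∫ u in Icc 0 T, (T - u) * ψ u
      ≤ T * ∫ u in Ioi 0, M * covarianceMajorant d A K B E ρ θ s u :=
        setIntegral_Icc_sub_mul_le hT hψ hg
          ((integrableOn_covarianceMajorant hd hK hs₀ hρ hθ₀).const_mul M)
    _ = T * M * ∫ u in Ioi 0, covarianceMajorant d A K B E ρ θ s u := by
        rw [integral_const_mul, mul_assoc]
    _ ≤ T * M * ((A * (d / 2 / (d / 2 - 1) * K ^ (2 / d)) + B * exp ρ / ρ + E / (θ * ρ))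
          * s ^ (1 + 2 / d)) :=
        mul_le_mul_of_nonneg_left (integral_covarianceMajorant_le hd hA hK hB hs₀ hs₁ hρ hθ₀)
          (by positivity)
    _ = _ := by ring

section Integrals

variable {X : Type*} [MeasurableSpace X] {ν : Measure X} {f μ : X → ℝ} {Mf Cμ : ℝ}

lemma abs_integral_le_of_support_subset {g : X → ℝ} {S : Set X} {B : ℝ} (hS : ν S < ⊤)
    (hgS : support g ⊆ S) (hg : ∀ x ∈ S, |g x| ≤ B) : |∫ x, g x ∂ν| ≤ B * ν.real S := by
  rw [← setIntegral_eq_integral_of_forall_compl_eq_zero fun x hx =>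
    notMem_support.1 fun h => hx (hgS h)]
  exact norm_setIntegral_le_of_norm_le_const (f := g) hS hg

lemma abs_integral_le_of_forall_abs_le {η : Measure X} [IsProbabilityMeasure η]
    (hf : ∀ y, |f y| ≤ Mf) : |∫ y, f y ∂η| ≤ Mf := by
  simpa using norm_integral_le_of_norm_le_const (μ := η) (f := f) (ae_of_all _ hf)

lemma abs_integral_le_of_density_le {η : Measure X} {B : ℝ}
    (hη : ∃ p : X → ℝ, Measurable p ∧ (∀ y, 0 ≤ p y ∧ p y ≤ B) ∧
      η = ν.withDensity fun y => ENNReal.ofReal (p y))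
    (hS : ν (support f) < ⊤) (hf : ∀ y, |f y| ≤ Mf) :
    |∫ y, f y ∂η| ≤ B * Mf * ν.real (support f) := by
  obtain ⟨p, hp, hpB, rfl⟩ := hη
  rw [integral_withDensity_eq_integral_toReal_smul hp.ennreal_ofReal
    (ae_of_all _ fun _ => ENNReal.ofReal_lt_top)]
  refine abs_integral_le_of_support_subset hS
    (support_smul_subset_right (fun y => (ENNReal.ofReal (p y)).toReal) f) fun y _ => ?_
  rw [ENNReal.toReal_ofReal (hpB y).1, smul_eq_mul, abs_mul, abs_of_nonneg (hpB y).1]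
  exact mul_le_mul (hpB y).2 (hf y) (abs_nonneg _) ((hpB y).1.trans (hpB y).2)

lemma abs_integral_mul_mul_le {h : X → ℝ} {B : ℝ} (hS : ν (support f) < ⊤)
    (hh : ∀ x, |h x| ≤ B) (hf : ∀ x, |f x| ≤ Mf) (hμ₀ : ∀ x, 0 ≤ μ x) (hμ : ∀ x, μ x ≤ Cμ) :
    |∫ x, h x * f x * μ x ∂ν| ≤ B * Mf * Cμ * ν.real (support f) := by
  refine abs_integral_le_of_support_subset hS
    ((support_mul_subset_left _ _).trans (support_mul_subset_right _ _)) fun x _ => ?_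
  have hB : 0 ≤ B := (abs_nonneg _).trans (hh x)
  rw [abs_mul, abs_mul, abs_of_nonneg (hμ₀ x)]
  exact mul_le_mul (mul_le_mul (hh x) (hf x) (abs_nonneg _) hB) (hμ x) (hμ₀ x)
    (mul_nonneg hB ((abs_nonneg _).trans (hf x)))

lemma abs_integral_mul_le (hS : ν (support f) < ⊤) (hf : ∀ x, |f x| ≤ Mf)
    (hμ₀ : ∀ x, 0 ≤ μ x) (hμ : ∀ x, μ x ≤ Cμ) :
    |∫ x, f x * μ x ∂ν| ≤ Mf * Cμ * ν.real (support f) := by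
  simpa using abs_integral_mul_mul_le (h := fun _ => 1) hS (fun _ => le_of_eq abs_one) hf hμ₀ hμ

lemma abs_integral_mul_mul_sub_sq_le {h : X → ℝ} {B : ℝ} (hS : ν (support f) < ⊤)
    (hh : ∀ x, |h x| ≤ B) (hf : ∀ x, |f x| ≤ Mf) (hμ₀ : ∀ x, 0 ≤ μ x) (hμ : ∀ x, μ x ≤ Cμ) :
    |∫ x, h x * f x * μ x ∂ν - (∫ x, f x * μ x ∂ν) ^ 2| ≤
      B * Mf * Cμ * ν.real (support f) + (Mf * Cμ * ν.real (support f)) ^ 2 := by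
  have hm := abs_integral_mul_le hS hf hμ₀ hμ
  calc _ ≤ |∫ x, h x * f x * μ x ∂ν| + |∫ x, f x * μ x ∂ν| ^ 2 := by
        rw [← abs_pow]; exact abs_sub _ _
    _ ≤ _ := add_le_add (abs_integral_mul_mul_le hS hh hf hμ₀ hμ)
        (pow_le_pow_left₀ (abs_nonneg _) hm 2)

lemma abs_integral_mul_mul_sub_sq_le_integral {h : X → ℝ} {B : ℝ} (hμi : Integrable μ ν)
    (hμ₀ : ∀ x, 0 ≤ μ x) (hh : Measurable h) (hhB : ∀ x, |h x| ≤ B) (hf : Measurable f)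
    (hfM : ∀ x, |f x| ≤ Mf) :
    |∫ x, h x * f x * μ x ∂ν - (∫ x, f x * μ x ∂ν) ^ 2| ≤
      Mf * ∫ x, |h x - ∫ z, f z * μ z ∂ν| * μ x ∂ν := by
  set m := ∫ x, f x * μ x ∂ν
  have hfμ : Integrable (fun x => f x * μ x) ν :=
    hμi.bdd_mul hf.aestronglyMeasurable (ae_of_all _ hfM)
  have hhfμ : Integrable (fun x => h x * f x * μ x) ν :=
    hμi.bdd_mul (hh.mul hf).aestronglyMeasurable
      (ae_of_all _ fun x => (abs_mul _ _).trans_le (mul_le_mul (hhB x) (hfM x) (abs_nonneg _)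
        ((abs_nonneg _).trans (hhB x))))
  have hdev : Integrable (fun x => |h x - m| * μ x) ν :=
    hμi.bdd_mul (hh.sub_const m).abs.aestronglyMeasurable
      (ae_of_all _ fun x => by
        rw [norm_eq_abs, abs_abs]
        exact (abs_sub _ _).trans (add_le_add (hhB x) le_rfl))
  have hsplit : ∫ x, h x * f x * μ x ∂ν - m ^ 2 = ∫ x, (h x - m) * (f x * μ x) ∂ν := by
    rw [sq, ← integral_const_mul, ← integral_sub hhfμ (hfμ.const_mul m)]
    congr 1 with x
    ring
  calc |∫ x, h x * f x * μ x ∂ν - m ^ 2| ≤ ∫ x, |(h x - m) * (f x * μ x)| ∂ν := by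
        rw [hsplit]; exact abs_integral_le_integral_abs
    _ ≤ ∫ x, Mf * (|h x - m| * μ x) ∂ν :=
        integral_mono_of_nonneg (ae_of_all _ fun _ => abs_nonneg _) (hdev.const_mul Mf)
          (ae_of_all _ fun x => by
            dsimp only
            rw [abs_mul, abs_mul, abs_of_nonneg (hμ₀ x)]
            have := mul_nonneg (abs_nonneg (h x - m)) (hμ₀ x)
            linarith [mul_le_mul_of_nonneg_right (hfM x) this])
    _ = Mf * ∫ x, |h x - m| * μ x ∂ν := integral_const_mul _ _

end Integrals

lemma rpow_mul_exp_add_div_rpow_le {u r d α lam : ℝ} (hu₀ : 0 < u) (hu₁ : u ≤ 1) (hr : 0 ≤ r)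
    (hlam : 0 ≤ lam) (hdα : 0 ≤ d + α) (hα : α ≤ 2) :
    u ^ (-d / 2) * exp (-lam * r ^ 2 / u) + u / (√u + r) ^ (d + α) ≤ 2 * u ^ (-d / 2) := by
  have hexp : exp (-lam * r ^ 2 / u) ≤ 1 :=
    exp_le_one_iff.2 (div_nonpos_of_nonpos_of_nonneg (by nlinarith [sq_nonneg r]) hu₀.le)
  have hjump : u / (√u + r) ^ (d + α) ≤ u ^ (-d / 2) :=
    calc u / (√u + r) ^ (d + α) ≤ u / √u ^ (d + α) :=
          div_le_div_of_nonneg_left hu₀.le (rpow_pos_of_pos (sqrt_pos.2 hu₀) _)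
            (rpow_le_rpow (sqrt_nonneg _) (le_add_of_nonneg_right hr) hdα)
      _ = u ^ (1 - (d + α) / 2) := by
          rw [sqrt_eq_rpow, ← rpow_mul hu₀.le, rpow_sub hu₀, rpow_one]; ring_nf
      _ ≤ u ^ (-d / 2) := rpow_le_rpow_of_exponent_ge hu₀ hu₁ (by linarith)
  nlinarith [rpow_nonneg hu₀.le (-d / 2)]

lemma abs_integral_le_of_small_time_density {E : Type*} [NormedAddCommGroup E] [MeasurableSpace E]
    {ν η : Measure E} [IsProbabilityMeasure η] {f : E → ℝ} {x : E} {u d α c₀ lam Mf : ℝ}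
    (hu : u ∈ Ioc 0 1) (hc₀ : 0 ≤ c₀) (hlam : 0 ≤ lam) (hdα : 0 ≤ d + α) (hα : α ≤ 2)
    (hη : ∃ p : E → ℝ, Measurable p ∧
      (∀ y, 0 ≤ p y ∧ p y ≤ c₀ * (u ^ (-d / 2) * exp (-lam * ‖y - x‖ ^ 2 / u)
        + u / (√u + ‖y - x‖) ^ (d + α))) ∧
      η = ν.withDensity fun y => ENNReal.ofReal (p y))
    (hS : ν (support f) < ⊤) (hf : ∀ y, |f y| ≤ Mf) :
    |∫ y, f y ∂η| ≤ Mf * min 1 (2 * c₀ * ν.real (support f) * u ^ (-(d / 2))) := by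
  have hMf : |∫ y, f y ∂η| ≤ Mf := abs_integral_le_of_forall_abs_le hf
  rw [mul_min_of_nonneg _ _ ((abs_nonneg _).trans hMf), mul_one]
  refine le_min hMf ?_
  obtain ⟨p, hp, hpB, hη⟩ := hη
  have hp_le : ∀ y, p y ≤ c₀ * (2 * u ^ (-d / 2)) := fun y =>
    (hpB y).2.trans <| mul_le_mul_of_nonneg_left
      (rpow_mul_exp_add_div_rpow_le hu.1 hu.2 (norm_nonneg _) hlam hdα hα) hc₀
  refine (abs_integral_le_of_density_le ⟨p, hp, fun y => ⟨(hpB y).1, hp_le y⟩, hη⟩ hS hf).trans_eq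
    ?_
  rw [neg_div]
  ring

theorem stmt5_general (d : ℕ) (hd : 3 ≤ d) (α : ℝ) (hα : α ∈ Set.Ioo (0 : ℝ) 2)
    (μ : EuclideanSpace ℝ (Fin d) → ℝ)
    (hμ_nonneg : ∀ x, 0 ≤ μ x) (Cμ : ℝ) (hμ_bdd : ∀ x, μ x ≤ Cμ)
    (hμ_prob : ∫ x, μ x = 1)
    (P : ℝ → Kernel (EuclideanSpace ℝ (Fin d)) (EuclideanSpace ℝ (Fin d)))
    (hP_markov : ∀ u > (0 : ℝ), IsMarkovKernel (P u))
    -- (iii) small-time density bound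
    (c₀ lam₀ : ℝ) (hc₀ : 0 < c₀) (hlam₀ : 0 < lam₀)
    (h_dens : ∀ u ∈ Set.Ioc (0 : ℝ) 1, ∀ x, ∃ p : EuclideanSpace ℝ (Fin d) → ℝ,
      Measurable p ∧
      (∀ y, 0 ≤ p y ∧ p y ≤ c₀ * (u ^ (-(d : ℝ) / 2) * Real.exp (-lam₀ * ‖y - x‖ ^ 2 / u)
        + u / (Real.sqrt u + ‖y - x‖) ^ ((d : ℝ) + α))) ∧
      (P u) x = volume.withDensity (fun y => ENNReal.ofReal (p y)))
    -- (iv) bounded density for u ≥ 1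
    (c₀' : ℝ)
    (h_dens1 : ∀ u : ℝ, 1 ≤ u → ∀ x, ∃ p : EuclideanSpace ℝ (Fin d) → ℝ,
      Measurable p ∧ (∀ y, 0 ≤ p y ∧ p y ≤ c₀') ∧
      (P u) x = volume.withDensity (fun y => ENNReal.ofReal (p y)))
    -- (v) exponential ergodicity
    (c ρ : ℝ) (hc : 0 < c) (hρ : 0 < ρ)
    (h_erg : ∀ u > (0 : ℝ), ∀ g : EuclideanSpace ℝ (Fin d) → ℝ, ∀ Mg : ℝ,
      Measurable g → (∀ x, |g x| ≤ Mg) →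
      ∫ x, |(∫ y, g y ∂(P u x)) - ∫ z, g z * μ z| * μ x ≤ c * Real.exp (-ρ * u) * Mg) :
    ∃ C : ℝ, ∀ T > (0 : ℝ), ∀ f : EuclideanSpace ℝ (Fin d) → ℝ, ∀ Mf : ℝ,
      Measurable f → (∀ x, |f x| ≤ Mf) → volume (Function.support f) < 1 →
      2 * (∫ u in Set.Icc 0 T, (T - u) *
          |(∫ x, (∫ y, f y ∂(P u x)) * f x * μ x) - (∫ x, f x * μ x) ^ 2|)
        ≤ C * T * Mf ^ 2 *
          (volume (Function.support f)).toReal ^ (1 + 2 / (d : ℝ)) := by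
  have hμ_int : Integrable μ := .of_integral_ne_zero (by rw [hμ_prob]; exact one_ne_zero)
  have hCμ : 0 ≤ Cμ := (hμ_nonneg 0).trans (hμ_bdd 0)
  have hc₀' : 0 ≤ c₀' := by
    obtain ⟨p, -, hp, -⟩ := h_dens1 1 le_rfl 0
    exact (hp 0).1.trans (hp 0).2
  obtain ⟨C, hC⟩ := exists_setIntegral_Icc_sub_mul_le (d := d) (by exact_mod_cast hd) hCμ
    (by positivity : 0 ≤ 2 * c₀) (sq_nonneg Cμ) (by positivity : 0 ≤ c₀' * Cμ + Cμ ^ 2) hc.le hρ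
  refine ⟨2 * C, fun T hT f Mf hf hfM hS => ?_⟩
  rw [← measureReal_def]
  set s := volume.real (support f)
  have hs₁ : s ≤ 1 := ENNReal.toReal_le_of_le_ofReal zero_le_one (by simpa using hS.le)
  have hSf : volume (support f) < ⊤ := hS.trans ENNReal.one_lt_top
  have hMf : 0 ≤ Mf := (abs_nonneg _).trans (hfM 0)
  have h_small : ∀ u ∈ Ioc (0 : ℝ) 1,
      |(∫ x, (∫ y, f y ∂(P u x)) * f x * μ x) - (∫ x, f x * μ x) ^ 2| ≤
        Mf ^ 2 * (Cμ * s * min 1 (2 * c₀ * s * u ^ (-((d : ℝ) / 2))) + Cμ ^ 2 * s ^ 2) :=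
    fun u hu => by
      have := hP_markov u hu.1
      exact (abs_integral_mul_mul_sub_sq_le hSf (fun x => abs_integral_le_of_small_time_density hu
        hc₀.le hlam₀.le (by positivity [hα.1]) hα.2.le (h_dens u hu x) hSf hfM) hfM hμ_nonneg
        hμ_bdd).trans_eq (by ring)
  have h_large : ∀ u, 1 < u →
      |(∫ x, (∫ y, f y ∂(P u x)) * f x * μ x) - (∫ x, f x * μ x) ^ 2| ≤
        Mf ^ 2 * ((c₀' * Cμ + Cμ ^ 2) * s ^ 2) := fun u hu =>
    (abs_integral_mul_mul_sub_sq_le hSf (fun x => abs_integral_le_of_density_le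
      (h_dens1 u hu.le x) hSf hfM) hfM hμ_nonneg hμ_bdd).trans_eq (by ring)
  have h_mix : ∀ u, 0 < u →
      |(∫ x, (∫ y, f y ∂(P u x)) * f x * μ x) - (∫ x, f x * μ x) ^ 2| ≤
        Mf ^ 2 * (c * exp (-ρ * u)) := fun u hu => by
    have := hP_markov u hu
    refine (abs_integral_mul_mul_sub_sq_le_integral hμ_int hμ_nonneg
      (hf.stronglyMeasurable.integral_kernel (κ := P u)).measurable
      (fun x => abs_integral_le_of_forall_abs_le hfM) hf hfM).trans ?_
    exact (mul_le_mul_of_nonneg_left (h_erg u hu f Mf hf hfM) hMf).trans_eq (by ring)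
  have := hC _ (Mf ^ 2) s T (sq_nonneg Mf) measureReal_nonneg hs₁ hT.le
    (fun _ => abs_nonneg _) h_small h_large h_mix
  linarith

/-- Variance-covariance bound, case `d ≥ 3`: under invariance,
L²(μ)-contractivity, the two-regime transition-density bounds and exponential
ergodicity, `2∫_0^T (T-u)|⟨P_u f,f⟩_μ - (∫ fμ)²| du ≤ C T ‖f‖_∞² |S|^{1+2/d}`
for every bounded measurable `f` with support of Lebesgue measure `< 1`. -/
theorem stmt5 (d : ℕ) (hd : 3 ≤ d) (α : ℝ) (hα : α ∈ Set.Ioo (0 : ℝ) 2)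
    (μ : EuclideanSpace ℝ (Fin d) → ℝ) (hμ_meas : Measurable μ)
    (hμ_nonneg : ∀ x, 0 ≤ μ x) (Cμ : ℝ) (hμ_bdd : ∀ x, μ x ≤ Cμ)
    (hμ_prob : ∫ x, μ x = 1)
    (P : ℝ → Kernel (EuclideanSpace ℝ (Fin d)) (EuclideanSpace ℝ (Fin d)))
    (hP_markov : ∀ u > (0 : ℝ), IsMarkovKernel (P u))
    -- (i) invariance of μ(x)dx
    (h_inv : ∀ u > (0 : ℝ), ∀ f : EuclideanSpace ℝ (Fin d) → ℝ, ∀ Mf : ℝ,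
      Measurable f → (∀ x, |f x| ≤ Mf) →
      ∫ x, (∫ y, f y ∂(P u x)) * μ x = ∫ x, f x * μ x)
    -- (ii) contraction on L²(μ)
    (h_contr : ∀ u > (0 : ℝ), ∀ f : EuclideanSpace ℝ (Fin d) → ℝ, Measurable f →
      Integrable (fun x => f x ^ 2 * μ x) →
      ∫ x, (∫ y, f y ∂(P u x)) ^ 2 * μ x ≤ ∫ x, f x ^ 2 * μ x)
    -- (iii) small-time density bound
    (c₀ lam₀ : ℝ) (hc₀ : 0 < c₀) (hlam₀ : 0 < lam₀)
    (h_dens : ∀ u ∈ Set.Ioc (0 : ℝ) 1, ∀ x, ∃ p : EuclideanSpace ℝ (Fin d) → ℝ,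
      Measurable p ∧
      (∀ y, 0 ≤ p y ∧ p y ≤ c₀ * (u ^ (-(d : ℝ) / 2) * Real.exp (-lam₀ * ‖y - x‖ ^ 2 / u)
        + u / (Real.sqrt u + ‖y - x‖) ^ ((d : ℝ) + α))) ∧
      (P u) x = volume.withDensity (fun y => ENNReal.ofReal (p y)))
    -- (iv) bounded density for u ≥ 1
    (c₀' : ℝ)
    (h_dens1 : ∀ u : ℝ, 1 ≤ u → ∀ x, ∃ p : EuclideanSpace ℝ (Fin d) → ℝ,
      Measurable p ∧ (∀ y, 0 ≤ p y ∧ p y ≤ c₀') ∧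
      (P u) x = volume.withDensity (fun y => ENNReal.ofReal (p y)))
    -- (v) exponential ergodicity
    (c ρ : ℝ) (hc : 0 < c) (hρ : 0 < ρ)
    (h_erg : ∀ u > (0 : ℝ), ∀ g : EuclideanSpace ℝ (Fin d) → ℝ, ∀ Mg : ℝ,
      Measurable g → (∀ x, |g x| ≤ Mg) →
      ∫ x, |(∫ y, g y ∂(P u x)) - ∫ z, g z * μ z| * μ x ≤ c * Real.exp (-ρ * u) * Mg) :
    ∃ C : ℝ, ∀ T > (0 : ℝ), ∀ f : EuclideanSpace ℝ (Fin d) → ℝ, ∀ Mf : ℝ,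
      Measurable f → (∀ x, |f x| ≤ Mf) → volume (Function.support f) < 1 →
      2 * (∫ u in Set.Icc 0 T, (T - u) *
          |(∫ x, (∫ y, f y ∂(P u x)) * f x * μ x) - (∫ x, f x * μ x) ^ 2|)
        ≤ C * T * Mf ^ 2 *
          (volume (Function.support f)).toReal ^ (1 + 2 / (d : ℝ)) :=
  stmt5_general d hd α hα μ hμ_nonneg Cμ hμ_bdd hμ_prob P hP_markov c₀ lam₀ hc₀ hlam₀ h_dens c₀'
    h_dens1 c ρ hc hρ h_erg
end

section
/- Let d ≥ 1. Let a : ℝ^d → ℝ^{d×d} be bounded and measurable and set c(x) := a(x)a(x)^T. Let b : ℝ^d → ℝ^d be measurable and suppose there exist C̃ > 0 and ρ̃ > 0 with ⟨x, b(x)⟩ ≤ −C̃ |x| for all |x| ≥ ρ̃. Let γ : ℝ^d → ℝ^{d×d} be measurable with γ_max := sup_x ‖γ(x)‖ ∈ (0, ∞). Let F : ℝ^d → [0,∞) be measurable and suppose there exists ε₀ > 0 with ∫_{ℝ^d} |z|² e^{ε₀|z|} F(z) dz < ∞. For ε > 0 set f*(x) := e^{ε|x|} and, for x ≠ 0, define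 A f*(x) := (1/2) Σ_{i,j=1}^d c_{ij}(x) ∂²_{ij} f*(x) + Σ_{i=1}^d b_i(x) ∂_i f*(x) + ∫_{ℝ^d} ( f*(x + γ(x)z) − f*(x) − (γ(x)z)·∇f*(x) ) F(z) dz. Then there exist ε ∈ (0, ε₀/γ_max], c₁ > 0 and R > 0 such that A f*(x) ≤ −c₁ f*(x) for all x with |x| ≥ R (so f* is a Lyapunov function satisfying the drift condition A f* ≤ −c₁ f* + c₂ for suitable c₁, c₂ > 0). -/
/-!
Write `n = ‖x‖` and `t = ‖x + v‖ - n`. Cauchy–Schwarz and AM–GM give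
`⟪v, x⟫ ≤ n t ≤ ⟪v, x⟫ + ‖v‖² / 2`, so the jump integrand `e^{ε‖x+v‖} - e^{εn} - ⟪v, ∇f*(x)⟫`
is nonnegative and at most `e^{εn} ε ‖v‖² (ε e^{ε‖v‖} + 1 / (2n))`; for `ε γ_max ≤ ε₀` the
exponential moment of `F` makes it integrable. Hence the diffusion and jump parts of `A f*` are
`O(ε e^{εn} (ε + 1/n))`, while the drift contributes at most `-ε C̃ e^{εn}`: taking `ε` small and
`n` large, the drift wins.
-/

open Real MeasureTheory Matrix
open scoped RealInnerProductSpace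

theorem Real.exp_sub_one_sub_le_sq_mul_exp_abs (s : ℝ) : exp s - 1 - s ≤ s ^ 2 * exp |s| := by
  have hconv : exp s - 1 ≤ s * exp s := by
    have h := mul_le_mul_of_nonneg_left (add_one_le_exp (-s)) (exp_pos s).le
    rw [exp_neg, mul_inv_cancel₀ (exp_pos s).ne'] at h
    linarith
  rcases le_total 0 s with hs | hs
  · rw [abs_of_nonneg hs]
    nlinarith [mul_le_mul_of_nonneg_left hconv hs]
  · have h := add_one_le_exp s
    nlinarith [one_le_exp (abs_nonneg s), mul_le_mul_of_nonneg_left hconv (neg_nonneg.2 hs)]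

section
variable {E : Type*} [NormedAddCommGroup E] [InnerProductSpace ℝ E]

theorem real_inner_le_norm_mul_norm_add_sub_norm (x v : E) :
    ⟪v, x⟫ ≤ ‖x‖ * (‖x + v‖ - ‖x‖) := by
  have h := real_inner_le_norm (x + v) x
  rw [inner_add_left, real_inner_self_eq_norm_sq] at h
  nlinarith

theorem norm_mul_norm_add_sub_norm_le (x v : E) :
    ‖x‖ * (‖x + v‖ - ‖x‖) ≤ ⟪v, x⟫ + ‖v‖ ^ 2 / 2 := by
  have h := norm_add_sq_real x v
  rw [real_inner_comm] at h
  nlinarith [sq_nonneg (‖x + v‖ - ‖x‖)]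

noncomputable def expJump (ε : ℝ) (x v : E) : ℝ :=
  exp (ε * ‖x + v‖) - exp (ε * ‖x‖) - ⟪v, (ε * exp (ε * ‖x‖) / ‖x‖) • x⟫

variable {ε : ℝ} {x : E}

theorem expJump_eq (hx : x ≠ 0) (v : E) :
    expJump ε x v = exp (ε * ‖x‖) * ((exp (ε * (‖x + v‖ - ‖x‖)) - 1 - ε * (‖x + v‖ - ‖x‖))
      + ε * (‖x + v‖ - ‖x‖ - ⟪v, x⟫ / ‖x‖)) := by
  have hn : ‖x‖ ≠ 0 := norm_ne_zero_iff.2 hx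
  have hsplit : exp (ε * ‖x + v‖) = exp (ε * ‖x‖) * exp (ε * (‖x + v‖ - ‖x‖)) := by
    rw [← exp_add]; ring_nf
  rw [expJump, real_inner_smul_right, hsplit]
  field_simp
  ring

theorem expJump_nonneg (hε : 0 ≤ ε) (hx : x ≠ 0) (v : E) : 0 ≤ expJump ε x v := by
  have hn : 0 < ‖x‖ := norm_pos_iff.2 hx
  have htaylor := add_one_le_exp (ε * (‖x + v‖ - ‖x‖))
  have hinner : ⟪v, x⟫ / ‖x‖ ≤ ‖x + v‖ - ‖x‖ := by
    rw [div_le_iff₀ hn, mul_comm]; exact real_inner_le_norm_mul_norm_add_sub_norm x v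
  rw [expJump_eq hx]
  exact mul_nonneg (exp_pos _).le (add_nonneg (by linarith) (mul_nonneg hε (by linarith)))

theorem expJump_le (hε : 0 ≤ ε) (hx : x ≠ 0) (v : E) :
    expJump ε x v ≤ exp (ε * ‖x‖) * ε * ‖v‖ ^ 2 * (ε * exp (ε * ‖v‖) + 1 / (2 * ‖x‖)) := by
  have hn : 0 < ‖x‖ := norm_pos_iff.2 hx
  set t := ‖x + v‖ - ‖x‖
  have ht : |t| ≤ ‖v‖ := by simpa using abs_norm_sub_norm_le (x + v) x
  have hquad : exp (ε * t) - 1 - ε * t ≤ ε ^ 2 * ‖v‖ ^ 2 * exp (ε * ‖v‖) := by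
    have habs : |ε * t| ≤ ε * ‖v‖ := by
      rw [abs_mul, abs_of_nonneg hε]; exact mul_le_mul_of_nonneg_left ht hε
    calc exp (ε * t) - 1 - ε * t ≤ (ε * t) ^ 2 * exp |ε * t| :=
          exp_sub_one_sub_le_sq_mul_exp_abs _
      _ ≤ (ε * ‖v‖) ^ 2 * exp (ε * ‖v‖) := by
          rw [← sq_abs (ε * t)]
          gcongr
      _ = ε ^ 2 * ‖v‖ ^ 2 * exp (ε * ‖v‖) := by ring
  have hlin : t - ⟪v, x⟫ / ‖x‖ ≤ ‖v‖ ^ 2 / (2 * ‖x‖) := by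
    rw [show t - ⟪v, x⟫ / ‖x‖ = (‖x‖ * t - ⟪v, x⟫) / ‖x‖ by field_simp,
      div_le_div_iff₀ hn (by positivity)]
    nlinarith [norm_mul_norm_add_sub_norm_le x v]
  rw [expJump_eq hx]
  calc exp (ε * ‖x‖) * ((exp (ε * t) - 1 - ε * t) + ε * (t - ⟪v, x⟫ / ‖x‖))
      ≤ exp (ε * ‖x‖) * (ε ^ 2 * ‖v‖ ^ 2 * exp (ε * ‖v‖) + ε * (‖v‖ ^ 2 / (2 * ‖x‖))) := by
        gcongr
    _ = exp (ε * ‖x‖) * ε * ‖v‖ ^ 2 * (ε * exp (ε * ‖v‖) + 1 / (2 * ‖x‖)) := by ring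

theorem integral_expJump_mul_le {Z : Type*} [NormedAddCommGroup Z] [MeasurableSpace Z]
    {μ : Measure Z} (hε : 0 ≤ ε) (hx : x ≠ 0) {L : Z → E} {γ ε₀ : ℝ} (hγ : 0 ≤ γ)
    (hL : ∀ z, ‖L z‖ ≤ γ * ‖z‖) (hεγ : ε * γ ≤ ε₀) {F : Z → ℝ} (hF : ∀ z, 0 ≤ F z)
    (hint : Integrable (fun z => ‖z‖ ^ 2 * exp (ε₀ * ‖z‖) * F z) μ) :
    ∫ z, expJump ε x (L z) * F z ∂μ
      ≤ ε * exp (ε * ‖x‖) * γ ^ 2 * (ε + 1 / ‖x‖) * ∫ z, ‖z‖ ^ 2 * exp (ε₀ * ‖z‖) * F z ∂μ := by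
  have hn : 0 < ‖x‖ := norm_pos_iff.2 hx
  rw [← integral_const_mul]
  refine integral_mono_of_nonneg
    (ae_of_all _ fun z => mul_nonneg (expJump_nonneg hε hx _) (hF z)) (hint.const_mul _)
    (ae_of_all _ fun z => ?_)
  have hsq : ‖L z‖ ^ 2 ≤ γ ^ 2 * ‖z‖ ^ 2 := by
    rw [← mul_pow]; exact pow_le_pow_left₀ (norm_nonneg _) (hL z) 2
  have hexp : exp (ε * ‖L z‖) ≤ exp (ε₀ * ‖z‖) := exp_le_exp.2 <|
    calc ε * ‖L z‖ ≤ ε * (γ * ‖z‖) := mul_le_mul_of_nonneg_left (hL z) hε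
      _ ≤ ε₀ * ‖z‖ := by rw [← mul_assoc]; gcongr
  have hone : 1 ≤ exp (ε₀ * ‖z‖) :=
    one_le_exp (mul_nonneg ((mul_nonneg hε hγ).trans hεγ) (norm_nonneg z))
  have hfactor : ε * exp (ε * ‖L z‖) + 1 / (2 * ‖x‖) ≤ (ε + 1 / ‖x‖) * exp (ε₀ * ‖z‖) := by
    have h2 : 1 / (2 * ‖x‖) ≤ 1 / ‖x‖ * exp (ε₀ * ‖z‖) :=
      calc 1 / (2 * ‖x‖) ≤ 1 / ‖x‖ := by gcongr; linarith
        _ ≤ 1 / ‖x‖ * exp (ε₀ * ‖z‖) := le_mul_of_one_le_right (by positivity) hone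
    have h1 : ε * exp (ε * ‖L z‖) ≤ ε * exp (ε₀ * ‖z‖) := by gcongr
    linarith
  calc expJump ε x (L z) * F z
      ≤ exp (ε * ‖x‖) * ε * ‖L z‖ ^ 2 * (ε * exp (ε * ‖L z‖) + 1 / (2 * ‖x‖)) * F z :=
        mul_le_mul_of_nonneg_right (expJump_le hε hx _) (hF z)
    _ ≤ exp (ε * ‖x‖) * ε * (γ ^ 2 * ‖z‖ ^ 2) * ((ε + 1 / ‖x‖) * exp (ε₀ * ‖z‖)) * F z := by
        have := hF z
        gcongr
    _ = _ := by ring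

end

theorem Matrix.abs_mul_transpose_apply_le {ι : Type*} [Fintype ι] {A : Matrix ι ι ℝ} {C : ℝ}
    (hA : ∀ i j, |A i j| ≤ C) (i j : ι) : |(A * Aᵀ) i j| ≤ Fintype.card ι * C ^ 2 := by
  calc |(A * Aᵀ) i j| ≤ ∑ k, |A i k| * |A j k| := by
        simpa only [mul_apply, transpose_apply, abs_mul] using
          Finset.abs_sum_le_sum_abs (fun k => A i k * A j k) Finset.univ
    _ ≤ ∑ _k : ι, C ^ 2 := Finset.sum_le_sum fun k _ => by
        rw [sq]; exact mul_le_mul (hA i k) (hA j k) (abs_nonneg _) ((abs_nonneg _).trans (hA i k))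
    _ = Fintype.card ι * C ^ 2 := by simp

theorem Finset.sum_sum_mul_le_of_abs_le {ι : Type*} [Fintype ι] {c h : ι → ι → ℝ} {K H : ℝ}
    (hc : ∀ i j, |c i j| ≤ K) (hh : ∀ i j, |h i j| ≤ H) :
    ∑ i, ∑ j, c i j * h i j ≤ Fintype.card ι ^ 2 * (K * H) := by
  calc ∑ i, ∑ j, c i j * h i j ≤ ∑ _i : ι, ∑ _j : ι, K * H :=
        Finset.sum_le_sum fun i _ => Finset.sum_le_sum fun j _ =>
          (le_abs_self _).trans <| (abs_mul _ _).trans_le <|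
            mul_le_mul (hc i j) (hh i j) (abs_nonneg _) ((abs_nonneg _).trans (hc i j))
    _ = Fintype.card ι ^ 2 * (K * H) := by simp [sq, mul_assoc]

section
variable {ι : Type*} [Fintype ι] {ε : ℝ} {x : EuclideanSpace ℝ ι}

theorem abs_hessian_exp_norm_apply_le [DecidableEq ι] (hε : 0 ≤ ε) (hx : x ≠ 0) (i j : ι) :
    |ε * (x i * x j / ‖x‖ ^ 2) * exp (ε * ‖x‖) * (ε - 1 / ‖x‖)
      + (if i = j then ε * exp (ε * ‖x‖) / ‖x‖ else 0)| ≤ ε * exp (ε * ‖x‖) * (ε + 2 / ‖x‖) := by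
  have hn : 0 < ‖x‖ := norm_pos_iff.2 hx
  have hcoord : |x i * x j / ‖x‖ ^ 2| ≤ 1 := by
    rw [abs_div, abs_mul, abs_of_pos (pow_pos hn 2), div_le_one (pow_pos hn 2), sq]
    simpa only [Real.norm_eq_abs] using
      mul_le_mul (PiLp.norm_apply_le x i) (PiLp.norm_apply_le x j) (norm_nonneg _) hn.le
  have hdiff : |ε - 1 / ‖x‖| ≤ ε + 1 / ‖x‖ := by
    rw [abs_le]; constructor <;> linarith [one_div_pos.2 hn]
  have hdiag : |(if i = j then ε * exp (ε * ‖x‖) / ‖x‖ else 0)| ≤ ε * exp (ε * ‖x‖) / ‖x‖ := by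
    split_ifs
    · exact (abs_of_nonneg (by positivity)).le
    · rw [abs_zero]; positivity
  calc _ ≤ ε * |x i * x j / ‖x‖ ^ 2| * exp (ε * ‖x‖) * |ε - 1 / ‖x‖|
          + ε * exp (ε * ‖x‖) / ‖x‖ := by
        refine (abs_add_le _ _).trans (add_le_add (le_of_eq ?_) hdiag)
        rw [abs_mul, abs_mul, abs_mul, abs_of_nonneg hε, abs_of_pos (exp_pos _)]
    _ ≤ ε * 1 * exp (ε * ‖x‖) * (ε + 1 / ‖x‖) + ε * exp (ε * ‖x‖) / ‖x‖ := by gcongr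
    _ = ε * exp (ε * ‖x‖) * (ε + 2 / ‖x‖) := by ring

theorem diffusion_exp_norm_le [DecidableEq ι] (A : Matrix ι ι ℝ) {C : ℝ}
    (hA : ∀ i j, |A i j| ≤ C) (hε : 0 ≤ ε) (hx : x ≠ 0) :
    1 / 2 * ∑ i, ∑ j, (A * Aᵀ) i j *
        (ε * (x i * x j / ‖x‖ ^ 2) * exp (ε * ‖x‖) * (ε - 1 / ‖x‖)
          + (if i = j then ε * exp (ε * ‖x‖) / ‖x‖ else 0))
      ≤ ε * exp (ε * ‖x‖) * (Fintype.card ι ^ 3 * C ^ 2) * (ε + 1 / ‖x‖) := by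
  have hsum := Finset.sum_sum_mul_le_of_abs_le (abs_mul_transpose_apply_le hA)
    (abs_hessian_exp_norm_apply_le hε hx)
  have hhalf : ε + 2 / ‖x‖ ≤ 2 * (ε + 1 / ‖x‖) := by
    rw [div_eq_mul_one_div 2]; linarith
  calc _ ≤ 1 / 2 * (Fintype.card ι ^ 2 * (Fintype.card ι * C ^ 2
          * (ε * exp (ε * ‖x‖) * (ε + 2 / ‖x‖)))) := by gcongr
    _ ≤ 1 / 2 * (Fintype.card ι ^ 2 * (Fintype.card ι * C ^ 2
          * (ε * exp (ε * ‖x‖) * (2 * (ε + 1 / ‖x‖))))) := by gcongr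
    _ = _ := by ring

theorem sum_mul_mul_div_eq_inner (x y : EuclideanSpace ℝ ι) (k r : ℝ) :
    ∑ i, y i * (k * x i / r) = k / r * ⟪x, y⟫ := by
  rw [PiLp.inner_apply, Finset.mul_sum]
  refine Finset.sum_congr rfl fun i _ => ?_
  simp only [RCLike.inner_apply, conj_trivial]
  ring

end

theorem mul_add_one_div_le_half {B C ε n : ℝ} (hB : 0 ≤ B) (hC : 0 < C)
    (hε : ε ≤ C / (4 * (B + 1))) (hn : 1 / n ≤ C / (4 * (B + 1))) : B * (ε + 1 / n) ≤ C / 2 :=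
  calc B * (ε + 1 / n) ≤ B * (2 * (C / (4 * (B + 1)))) := by gcongr; linarith
    _ = B / (B + 1) * (C / 2) := by field_simp; ring
    _ ≤ 1 * (C / 2) := by gcongr; rw [div_le_one (by positivity)]; linarith
    _ = C / 2 := one_mul _

theorem stmt10_general (d : ℕ)
    (a : EuclideanSpace ℝ (Fin d) → Matrix (Fin d) (Fin d) ℝ)
    (Ca : ℝ) (ha_bdd : ∀ x i j, |a x i j| ≤ Ca)
    (b : EuclideanSpace ℝ (Fin d) → EuclideanSpace ℝ (Fin d))
    (Ctil ρtil : ℝ) (hCtil : 0 < Ctil)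
    (hdrift : ∀ x : EuclideanSpace ℝ (Fin d), ρtil ≤ ‖x‖ → ⟪x, b x⟫ ≤ -Ctil * ‖x‖)
    (γ : EuclideanSpace ℝ (Fin d) → Matrix (Fin d) (Fin d) ℝ)
    (γmax : ℝ) (hγmax : 0 < γmax)
    (hγ_bdd : ∀ x z, ‖Matrix.toEuclideanLin (γ x) z‖ ≤ γmax * ‖z‖)
    (F : EuclideanSpace ℝ (Fin d) → ℝ)
    (hF_nonneg : ∀ z, 0 ≤ F z)
    (ε₀ : ℝ) (hε₀ : 0 < ε₀)
    (hF_int : Integrable (fun z : EuclideanSpace ℝ (Fin d) =>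
      ‖z‖ ^ 2 * Real.exp (ε₀ * ‖z‖) * F z)) :
    ∃ ε ∈ Set.Ioc (0 : ℝ) (ε₀ / γmax), ∃ c₁ > (0 : ℝ), ∃ R > (0 : ℝ),
      ∀ x : EuclideanSpace ℝ (Fin d), R ≤ ‖x‖ →
        (1 / 2) * (∑ i, ∑ j, (a x * (a x)ᵀ) i j *
            (ε * (x i * x j / ‖x‖ ^ 2) * Real.exp (ε * ‖x‖) * (ε - 1 / ‖x‖)
              + (if i = j then ε * Real.exp (ε * ‖x‖) / ‖x‖ else 0)))
          + (∑ i, b x i * (ε * Real.exp (ε * ‖x‖) * x i / ‖x‖))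
          + (∫ z : EuclideanSpace ℝ (Fin d),
              (Real.exp (ε * ‖x + Matrix.toEuclideanLin (γ x) z‖) - Real.exp (ε * ‖x‖)
                - ⟪Matrix.toEuclideanLin (γ x) z,
                    (ε * Real.exp (ε * ‖x‖) / ‖x‖) • x⟫) * F z)
        ≤ -c₁ * Real.exp (ε * ‖x‖) := by
  set M := ∫ z : EuclideanSpace ℝ (Fin d), ‖z‖ ^ 2 * exp (ε₀ * ‖z‖) * F z
  have hM : 0 ≤ M := integral_nonneg fun z => mul_nonneg (by positivity) (hF_nonneg z)
  obtain ⟨B, hB0, hB⟩ : ∃ B, 0 ≤ B ∧ B = (d : ℝ) ^ 3 * Ca ^ 2 + γmax ^ 2 * M :=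
    ⟨_, by positivity, rfl⟩
  have hδ : 0 < Ctil / (4 * (B + 1)) := by positivity
  obtain ⟨ε, hε, hεε₀, hεδ⟩ : ∃ ε, 0 < ε ∧ ε ≤ ε₀ / γmax ∧ ε ≤ Ctil / (4 * (B + 1)) :=
    ⟨_, lt_min (div_pos hε₀ hγmax) hδ, min_le_left _ _, min_le_right _ _⟩
  refine ⟨ε, ⟨hε, hεε₀⟩, ε * Ctil / 2, by positivity, max ρtil (Ctil / (4 * (B + 1)))⁻¹,
    lt_max_of_lt_right (inv_pos.2 hδ), fun x hxR => ?_⟩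
  have hx : x ≠ 0 :=
    norm_pos_iff.1 ((inv_pos.2 hδ).trans_le ((le_max_right _ _).trans hxR))
  have hdiffusion := diffusion_exp_norm_le (a x) (ha_bdd x) hε.le hx
  rw [Fintype.card_fin] at hdiffusion
  have hdrift_term : ∑ i, b x i * (ε * exp (ε * ‖x‖) * x i / ‖x‖) ≤ -(ε * exp (ε * ‖x‖) * Ctil) :=
    calc _ = ε * exp (ε * ‖x‖) / ‖x‖ * ⟪x, b x⟫ := sum_mul_mul_div_eq_inner x (b x) _ _
      _ ≤ ε * exp (ε * ‖x‖) / ‖x‖ * (-Ctil * ‖x‖) :=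
        mul_le_mul_of_nonneg_left (hdrift x ((le_max_left _ _).trans hxR)) (by positivity)
      _ = -(ε * exp (ε * ‖x‖) * Ctil) := by field_simp [norm_ne_zero_iff.2 hx]
  have hjump := integral_expJump_mul_le (μ := volume) hε.le hx hγmax.le (hγ_bdd x)
    ((le_div_iff₀ hγmax).1 hεε₀) hF_nonneg hF_int
  have hBε : B * (ε + 1 / ‖x‖) ≤ Ctil / 2 := by
    refine mul_add_one_div_le_half hB0 hCtil hεδ ?_
    rw [one_div]; exact inv_le_of_inv_le₀ hδ ((le_max_right _ _).trans hxR)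
  calc _ ≤ ε * exp (ε * ‖x‖) * (d ^ 3 * Ca ^ 2) * (ε + 1 / ‖x‖) + -(ε * exp (ε * ‖x‖) * Ctil)
        + ε * exp (ε * ‖x‖) * γmax ^ 2 * (ε + 1 / ‖x‖) * M :=
        add_le_add (add_le_add hdiffusion hdrift_term) hjump
    _ = ε * exp (ε * ‖x‖) * (B * (ε + 1 / ‖x‖) - Ctil) := by rw [hB]; ring
    _ ≤ ε * exp (ε * ‖x‖) * (Ctil / 2 - Ctil) := by gcongr
    _ = -(ε * Ctil / 2) * exp (ε * ‖x‖) := by ring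

/-- Lyapunov function for the jump-diffusion generator: under the
drift condition, boundedness of `a` and `γ` and an exponential moment for the Lévy
density `F`, there are `ε ∈ (0, ε₀/γ_max]`, `c₁ > 0` and `R > 0` such that
`A f*(x) ≤ -c₁ f*(x)` for all `|x| ≥ R`, where `f*(x) = e^{ε|x|}` and `A` is the sum of
the continuous part `(1/2)Σ c_ij ∂²_ij f* + Σ b_i ∂_i f*` (with `c = a aᵀ`) and the jump
part `∫ (f*(x+γ(x)z) - f*(x) - (γ(x)z)·∇f*(x)) F(z) dz`. -/
theorem stmt10 (d : ℕ) (hd : 1 ≤ d)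
    (a : EuclideanSpace ℝ (Fin d) → Matrix (Fin d) (Fin d) ℝ)
    (ha_meas : ∀ i j, Measurable fun x => a x i j)
    (Ca : ℝ) (ha_bdd : ∀ x i j, |a x i j| ≤ Ca)
    (b : EuclideanSpace ℝ (Fin d) → EuclideanSpace ℝ (Fin d)) (hb_meas : Measurable b)
    (Ctil ρtil : ℝ) (hCtil : 0 < Ctil) (hρtil : 0 < ρtil)
    (hdrift : ∀ x : EuclideanSpace ℝ (Fin d), ρtil ≤ ‖x‖ → ⟪x, b x⟫ ≤ -Ctil * ‖x‖)
    (γ : EuclideanSpace ℝ (Fin d) → Matrix (Fin d) (Fin d) ℝ)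
    (hγ_meas : ∀ i j, Measurable fun x => γ x i j)
    (γmax : ℝ) (hγmax : 0 < γmax)
    (hγ_bdd : ∀ x z, ‖Matrix.toEuclideanLin (γ x) z‖ ≤ γmax * ‖z‖)
    (F : EuclideanSpace ℝ (Fin d) → ℝ) (hF_meas : Measurable F)
    (hF_nonneg : ∀ z, 0 ≤ F z)
    (ε₀ : ℝ) (hε₀ : 0 < ε₀)
    (hF_int : Integrable (fun z : EuclideanSpace ℝ (Fin d) =>
      ‖z‖ ^ 2 * Real.exp (ε₀ * ‖z‖) * F z)) :
    ∃ ε ∈ Set.Ioc (0 : ℝ) (ε₀ / γmax), ∃ c₁ > (0 : ℝ), ∃ R > (0 : ℝ),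
      ∀ x : EuclideanSpace ℝ (Fin d), R ≤ ‖x‖ →
        (1 / 2) * (∑ i, ∑ j, (a x * (a x)ᵀ) i j *
            (ε * (x i * x j / ‖x‖ ^ 2) * Real.exp (ε * ‖x‖) * (ε - 1 / ‖x‖)
              + (if i = j then ε * Real.exp (ε * ‖x‖) / ‖x‖ else 0)))
          + (∑ i, b x i * (ε * Real.exp (ε * ‖x‖) * x i / ‖x‖))
          + (∫ z : EuclideanSpace ℝ (Fin d),
              (Real.exp (ε * ‖x + Matrix.toEuclideanLin (γ x) z‖) - Real.exp (ε * ‖x‖)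
                - ⟪Matrix.toEuclideanLin (γ x) z,
                    (ε * Real.exp (ε * ‖x‖) / ‖x‖) • x⟫) * F z)
        ≤ -c₁ * Real.exp (ε * ‖x‖) :=
  stmt10_general d a Ca ha_bdd b Ctil ρtil hCtil hdrift γ γmax hγmax hγ_bdd F hF_nonneg ε₀ hε₀
    hF_int
end

section
/- Let d ≥ 1, ε > 0, γ_max ∈ (0,∞), and set f*(x) := e^{ε|x|}. Let γ : ℝ^d → ℝ^{d×d} be measurable with sup_x ‖γ(x)‖ ≤ γ_max, and let F : ℝ^d → [0,∞) be measurable with m := ∫_{ℝ^d} |z|² e^{ε γ_max |z|} F(z) dz < ∞. Then there exists a constant C, depending only on γ_max and m, such that for every x ≠ 0: ∫_{{z : |z| ≤ |x|/(2γ_max)}} | f*(x + γ(x)z) − f*(x) − (γ(x)z)·∇f*(x) | F(z) dz ≤ C ε e^{ε|x|} (ε + 1/|x|). -/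
open Real MeasureTheory
open scoped RealInnerProductSpace

/-!
With `a = ‖x‖` and `v = γ(x) z`, the error term splits into the Taylor remainder of `exp`,
`e^{εa} (e^s - 1 - s)` with `s = ε (‖x + v‖ - a)`, `|s| ≤ ε ‖v‖`, and `ε e^{εa}` times the Taylor
remainder of the norm, `0 ≤ ‖x + v‖ - a - ⟪x, v⟫ / a ≤ ‖v‖² / a`. Both are at most
`ε e^{εa} (ε + 1/a) ‖v‖² e^{ε‖v‖}` for every `v`, and `‖v‖ ≤ γ_max ‖z‖` turns this into the
integrand of `m`, so `C = γ_max² m + 1` works.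
-/

lemma abs_exp_sub_one_sub_le (s : ℝ) : |exp s - 1 - s| ≤ s ^ 2 * exp |s| := by
  have h_lower : s ≤ exp s - 1 := by linarith [add_one_le_exp s]
  have h_upper : exp s - 1 ≤ s * exp s := by
    have h := mul_le_mul_of_nonneg_left (add_one_le_exp (-s)) (exp_pos s).le
    rw [← exp_add, add_neg_cancel, exp_zero] at h
    linarith
  rw [abs_of_nonneg (by linarith)]
  rcases le_or_gt 0 s with hs | hs
  · rw [abs_of_nonneg hs]
    nlinarith
  · have h_one : 1 ≤ exp |s| := one_le_exp (abs_nonneg s)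
    nlinarith [sq_nonneg s]

lemma abs_exp_sub_exp_sub_mul_le (a b : ℝ) :
    |exp b - exp a - exp a * (b - a)| ≤ exp a * ((b - a) ^ 2 * exp |b - a|) := by
  have h : exp b - exp a - exp a * (b - a) = exp a * (exp (b - a) - 1 - (b - a)) := by
    rw [exp_sub]; field_simp
  rw [h, abs_mul, abs_of_pos (exp_pos a)]
  exact mul_le_mul_of_nonneg_left (abs_exp_sub_one_sub_le _) (exp_pos a).le

section InnerProductSpace

variable {E : Type*} [NormedAddCommGroup E] [InnerProductSpace ℝ E]

lemma abs_norm_add_sub_norm_sub_inner_le {x : E} (hx : x ≠ 0) (v : E) :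
    |‖x + v‖ - ‖x‖ - ⟪x, v⟫ / ‖x‖| ≤ ‖v‖ ^ 2 / ‖x‖ := by
  have ha : 0 < ‖x‖ := norm_pos_iff.mpr hx
  set t := ⟪x, v⟫ / ‖x‖ with ht
  have hinner : ⟪x, v⟫ = ‖x‖ * t := by rw [ht]; field_simp
  have hsq : ‖x + v‖ ^ 2 = ‖x‖ ^ 2 + 2 * (‖x‖ * t) + ‖v‖ ^ 2 := by
    rw [norm_add_sq_real, hinner]
  have h_lower : ‖x‖ + t ≤ ‖x + v‖ := by
    have h := real_inner_le_norm (x + v) x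
    rw [inner_add_left, real_inner_self_eq_norm_sq, real_inner_comm, hinner] at h
    nlinarith
  have h_upper : ‖x‖ * ‖x + v‖ ≤ ‖x‖ ^ 2 + ‖x‖ * t + ‖v‖ ^ 2 := by
    have ht_le : |t| ≤ ‖v‖ := by
      rw [ht, abs_div, abs_norm, div_le_iff₀ ha, mul_comm]
      exact abs_real_inner_le_norm x v
    have h_rhs : 0 ≤ ‖x‖ ^ 2 + ‖x‖ * t + ‖v‖ ^ 2 := by
      nlinarith [neg_abs_le t, sq_nonneg (‖x‖ - ‖v‖)]
    refine le_of_pow_le_pow_left₀ two_ne_zero h_rhs ?_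
    rw [mul_pow, hsq]
    nlinarith [sq_nonneg (‖x‖ * t + ‖v‖ ^ 2), sq_nonneg (‖x‖ * ‖v‖)]
  rw [abs_of_nonneg (by linarith), le_div_iff₀ ha]
  nlinarith

lemma abs_exp_mul_norm_add_sub_sub_inner_le {ε : ℝ} (hε : 0 ≤ ε) {x : E} (hx : x ≠ 0) (v : E) :
    |exp (ε * ‖x + v‖) - exp (ε * ‖x‖) - ⟪v, (ε * exp (ε * ‖x‖) / ‖x‖) • x⟫|
      ≤ ε * exp (ε * ‖x‖) * (ε + 1 / ‖x‖) * (‖v‖ ^ 2 * exp (ε * ‖v‖)) := by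
  have ha : 0 < ‖x‖ := norm_pos_iff.mpr hx
  set e := exp (ε * ‖x‖)
  have he : 0 ≤ ε * e := mul_nonneg hε (exp_pos _).le
  have hsplit : exp (ε * ‖x + v‖) - e - ⟪v, (ε * e / ‖x‖) • x⟫
      = (exp (ε * ‖x + v‖) - e - e * (ε * ‖x + v‖ - ε * ‖x‖))
        + ε * e * (‖x + v‖ - ‖x‖ - ⟪x, v⟫ / ‖x‖) := by
    rw [real_inner_smul_right, real_inner_comm]; field_simp; ring
  have hjump : |ε * ‖x + v‖ - ε * ‖x‖| ≤ ε * ‖v‖ := by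
    rw [← mul_sub, abs_mul, abs_of_nonneg hε]
    gcongr
    simpa using abs_norm_sub_norm_le (x + v) x
  have hexp : |exp (ε * ‖x + v‖) - e - e * (ε * ‖x + v‖ - ε * ‖x‖)|
      ≤ e * ((ε * ‖v‖) ^ 2 * exp (ε * ‖v‖)) := by
    refine (abs_exp_sub_exp_sub_mul_le _ _).trans ?_
    rw [← sq_abs]
    gcongr
  have hnorm : ε * e * |‖x + v‖ - ‖x‖ - ⟪x, v⟫ / ‖x‖| ≤ ε * e * (‖v‖ ^ 2 / ‖x‖ * exp (ε * ‖v‖)) := by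
    gcongr
    exact (abs_norm_add_sub_norm_sub_inner_le hx v).trans
      (le_mul_of_one_le_right (by positivity) (one_le_exp (by positivity)))
  rw [hsplit]
  calc _ ≤ e * ((ε * ‖v‖) ^ 2 * exp (ε * ‖v‖)) + ε * e * (‖v‖ ^ 2 / ‖x‖ * exp (ε * ‖v‖)) := by
        refine (abs_add_le _ _).trans ?_
        rw [abs_mul, abs_of_nonneg he]
        exact add_le_add hexp hnorm
    _ = ε * e * (ε + 1 / ‖x‖) * (‖v‖ ^ 2 * exp (ε * ‖v‖)) := by ring

end InnerProductSpace

theorem stmt12_general (d : ℕ) (ε γmax : ℝ) (hε : 0 < ε)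
    (γ : EuclideanSpace ℝ (Fin d) → Matrix (Fin d) (Fin d) ℝ)
    (hγ_bdd : ∀ x z, ‖Matrix.toEuclideanLin (γ x) z‖ ≤ γmax * ‖z‖)
    (F : EuclideanSpace ℝ (Fin d) → ℝ)
    (hF_nonneg : ∀ z, 0 ≤ F z) (m : ℝ)
    (hF_int : Integrable (fun z : EuclideanSpace ℝ (Fin d) =>
      ‖z‖ ^ 2 * Real.exp (ε * γmax * ‖z‖) * F z))
    (hm : (∫ z : EuclideanSpace ℝ (Fin d), ‖z‖ ^ 2 * Real.exp (ε * γmax * ‖z‖) * F z) = m) :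
    ∃ C > (0 : ℝ), ∀ x : EuclideanSpace ℝ (Fin d), x ≠ 0 →
      (∫ z in {z : EuclideanSpace ℝ (Fin d) | ‖z‖ ≤ ‖x‖ / (2 * γmax)},
          |Real.exp (ε * ‖x + Matrix.toEuclideanLin (γ x) z‖) - Real.exp (ε * ‖x‖)
            - ⟪Matrix.toEuclideanLin (γ x) z,
                (ε * Real.exp (ε * ‖x‖) / ‖x‖) • x⟫| * F z)
        ≤ C * ε * Real.exp (ε * ‖x‖) * (ε + 1 / ‖x‖) := by
  have hm_nonneg : 0 ≤ m := hm ▸ integral_nonneg fun z => mul_nonneg (by positivity) (hF_nonneg z)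
  refine ⟨γmax ^ 2 * m + 1, by nlinarith [mul_nonneg (sq_nonneg γmax) hm_nonneg], fun x hx => ?_⟩
  set P := ε * exp (ε * ‖x‖) * (ε + 1 / ‖x‖)
  have hP : 0 ≤ P := by positivity
  have hpointwise : ∀ z, |exp (ε * ‖x + Matrix.toEuclideanLin (γ x) z‖) - exp (ε * ‖x‖)
      - ⟪Matrix.toEuclideanLin (γ x) z, (ε * exp (ε * ‖x‖) / ‖x‖) • x⟫| * F z
      ≤ P * γmax ^ 2 * (‖z‖ ^ 2 * exp (ε * γmax * ‖z‖) * F z) := fun z => by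
    have hv := hγ_bdd x z
    calc _ ≤ P * (‖Matrix.toEuclideanLin (γ x) z‖ ^ 2
            * exp (ε * ‖Matrix.toEuclideanLin (γ x) z‖)) * F z := by
          gcongr
          · exact hF_nonneg z
          · exact abs_exp_mul_norm_add_sub_sub_inner_le hε.le hx _
      _ ≤ P * ((γmax * ‖z‖) ^ 2 * exp (ε * (γmax * ‖z‖))) * F z := by
          gcongr
          exact hF_nonneg z
      _ = P * γmax ^ 2 * (‖z‖ ^ 2 * exp (ε * γmax * ‖z‖) * F z) := by ring_nf
  calc _ ≤ ∫ z in {z | ‖z‖ ≤ ‖x‖ / (2 * γmax)},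
          P * γmax ^ 2 * (‖z‖ ^ 2 * exp (ε * γmax * ‖z‖) * F z) :=
        integral_mono_of_nonneg (ae_of_all _ fun z => mul_nonneg (abs_nonneg _) (hF_nonneg z))
          (hF_int.const_mul _).integrableOn (ae_of_all _ hpointwise)
    _ ≤ ∫ z, P * γmax ^ 2 * (‖z‖ ^ 2 * exp (ε * γmax * ‖z‖) * F z) :=
        setIntegral_le_integral (hF_int.const_mul _)
          (ae_of_all _ fun z => mul_nonneg (by positivity) (mul_nonneg (by positivity) (hF_nonneg z)))
    _ = γmax ^ 2 * m * P := by rw [integral_const_mul, hm]; ring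
    _ ≤ (γmax ^ 2 * m + 1) * P := by gcongr; linarith
    _ = (γmax ^ 2 * m + 1) * ε * exp (ε * ‖x‖) * (ε + 1 / ‖x‖) := by ring

/-- Bound on the small-jump part of the generator applied to
`f*(x) = e^{ε|x|}`: if `‖γ(x)z‖ ≤ γ_max ‖z‖` and `m = ∫ |z|² e^{ε γ_max |z|} F(z) dz < ∞`,
then for a constant `C` depending only on `γ_max` and `m`,
`∫_{|z| ≤ |x|/(2γ_max)} |f*(x+γ(x)z) - f*(x) - (γ(x)z)·∇f*(x)| F(z) dz
  ≤ C ε e^{ε|x|}(ε + 1/|x|)` for every `x ≠ 0`. -/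
theorem stmt12 (d : ℕ) (hd : 1 ≤ d) (ε γmax : ℝ) (hε : 0 < ε) (hγmax : 0 < γmax)
    (γ : EuclideanSpace ℝ (Fin d) → Matrix (Fin d) (Fin d) ℝ)
    (hγ_meas : ∀ i j, Measurable fun x => γ x i j)
    (hγ_bdd : ∀ x z, ‖Matrix.toEuclideanLin (γ x) z‖ ≤ γmax * ‖z‖)
    (F : EuclideanSpace ℝ (Fin d) → ℝ) (hF_meas : Measurable F)
    (hF_nonneg : ∀ z, 0 ≤ F z) (m : ℝ)
    (hF_int : Integrable (fun z : EuclideanSpace ℝ (Fin d) =>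
      ‖z‖ ^ 2 * Real.exp (ε * γmax * ‖z‖) * F z))
    (hm : (∫ z : EuclideanSpace ℝ (Fin d), ‖z‖ ^ 2 * Real.exp (ε * γmax * ‖z‖) * F z) = m) :
    ∃ C > (0 : ℝ), ∀ x : EuclideanSpace ℝ (Fin d), x ≠ 0 →
      (∫ z in {z : EuclideanSpace ℝ (Fin d) | ‖z‖ ≤ ‖x‖ / (2 * γmax)},
          |Real.exp (ε * ‖x + Matrix.toEuclideanLin (γ x) z‖) - Real.exp (ε * ‖x‖)
            - ⟪Matrix.toEuclideanLin (γ x) z,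
                (ε * Real.exp (ε * ‖x‖) / ‖x‖) • x⟫| * F z)
        ≤ C * ε * Real.exp (ε * ‖x‖) * (ε + 1 / ‖x‖) :=
  stmt12_general d ε γmax hε γ hγ_bdd F hF_nonneg m hF_int hm
end

section
/- Let d = 1 and α ∈ (0,2). Let (X_t)_{t≥0} be a jointly measurable stationary ℝ-valued process on a probability space whose one-dimensional marginal has a bounded density μ with respect to Lebesgue measure, with μ in the anisotropic Hölder class H_1(β, L) for some β, L > 0. Assume there is a constant C₀ such that for every T > 0 and every bounded measurable f : ℝ → ℝ whose support S has Lebesgue measure |S| < 1: Var(∫_0^T f(X_t) dt) ≤ C₀ T ‖f‖_∞² |S|² (1 + (log(1/|S|))^{2−(1+α)/2} + log(1/|S|)). Let K be a kernel function satisfying ∫_ℝ K = 1, ‖K‖_∞ < ∞, supp(K) ⊆ [−1,1], ∫_ℝ K(x) x^l dx = 0 for l ∈ {1,…,M}, with M ≥ β, and define μ̂_{h,T}(x) = (1/(Th)) ∫_0^T K((x − X_u)/h) du. Then there is a constant C, independent of x, T and h, such that: (i) for every x ∈ ℝ, T > 0 and h ∈ (0, 1/2], E[|μ̂_{h,T}(x)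 − μ(x)|²] ≤ C ( h^{2β} + T^{−1} (1 + (log(1/h))^{2−(1+α)/2} + log(1/h)) ); (ii) for any a ∈ (0,1] with 2aβ > 1, taking h = T^{−a}, one has E[|μ̂_{h,T}(x) − μ(x)|²] ≤ C (log T)^{max(2−(1+α)/2, 1)} / T for all sufficiently large T and all x ∈ ℝ. -/
open Real MeasureTheory

/-- Largest integer strictly smaller than `b` (for `b > 0`). -/
noncomputable def flr (b : ℝ) : ℕ := ⌈b⌉₊ - 1

/-- The one-dimensional Hölder class `H_1(β, L)`. -/
def memHolder1 (β L : ℝ) (g : ℝ → ℝ) : Prop :=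
  (∀ k ≤ flr β, ∀ x, |deriv^[k] g x| ≤ L) ∧
  (∀ k < flr β, Differentiable ℝ (deriv^[k] g)) ∧
  (∀ t x : ℝ, |deriv^[flr β] g (x + t) - deriv^[flr β] g x|
    ≤ L * |t| ^ (β - (flr β : ℝ)))

/-!
Bias–variance decomposition. By stationarity the mean of `∫₀ᵀ K((x - X_u)/h) du` is `T` times
the convolution of `K((x - ·)/h)` with `μ`, so the bias is the kernel-smoothing error: expanding
`μ` to order `⌊β⌋` around `x`, the vanishing moments of `K` kill the Taylor polynomial and the
Hölder remainder leaves `O(h^β)`. For the variance, `y ↦ K((x - y)/h)` is split at `x` into two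
pieces supported in intervals of length `h < 1`, to which the assumed small-support variance
bound applies; since `s² (1 + log(1/s)^γ + log(1/s)) ≤ 9 h² (1 + log(1/h)^γ + log(1/h))` for
`s ≤ h ≤ 1/2`, this gives `O(T⁻¹ (1 + log(1/h)^γ + log(1/h)))` for the estimator.
Part (ii) is (i) at `h = T^{-a}`: `2aβ > 1` makes the squared bias at most `1/T`, and
`log(1/h) = a log T`.
-/

open scoped Nat ENNReal
open ProbabilityTheory

noncomputable def logFactor (γ s : ℝ) : ℝ := 1 + log (1 / s) ^ γ + log (1 / s)

lemma half_le_log_one_div {h : ℝ} (hh₀ : 0 < h) (hh : h ≤ 1 / 2) : 1 / 2 ≤ log (1 / h) :=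
  calc (1 : ℝ) / 2 ≤ log 2 := by linarith [log_two_gt_d9]
    _ ≤ log (1 / h) := log_le_log two_pos (by rw [le_div_iff₀ hh₀]; linarith)

lemma logFactor_nonneg (γ : ℝ) {s : ℝ} (hs₀ : 0 ≤ s) (hs₁ : s ≤ 1) : 0 ≤ logFactor γ s := by
  have : 0 ≤ log (1 / s) := by rw [one_div, log_inv]; linarith [log_nonpos hs₀ hs₁]
  have := rpow_nonneg this γ
  unfold logFactor
  linarith

/-- Writing `s = h u`, the factor `log (1/s) = log (1/h) + log (1/u)` is at most
`log (1/h) (1 + 2 log (1/u))` because `log (1/h) ≥ 1/2`, and `u (1 + 2 log (1/u)) ≤ 3`. -/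
lemma sq_mul_log_rpow_le {e s h : ℝ} (he₀ : 0 ≤ e) (he₂ : e ≤ 2) (hs : 0 ≤ s) (hsh : s ≤ h)
    (hh : h ≤ 1 / 2) : s ^ 2 * log (1 / s) ^ e ≤ 9 * (h ^ 2 * log (1 / h) ^ e) := by
  rcases hs.eq_or_lt with rfl | hs
  · have : 0 ≤ log (1 / h) := by rw [one_div, log_inv]; linarith [log_nonpos hsh (by linarith)]
    simp only [ne_eq, OfNat.ofNat_ne_zero, not_false_eq_true, zero_pow, zero_mul]
    positivity
  have hh₀ : 0 < h := hs.trans_le hsh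
  have hℓh := half_le_log_one_div hh₀ hh
  set u := s / h
  have hsu : s = h * u := by simp only [u]; field_simp
  have hu₀ : 0 < u := div_pos hs hh₀
  have hu₁ : u ≤ 1 := div_le_one_of_le₀ hsh hh₀.le
  have hℓu : 0 ≤ log (1 / u) := log_nonneg (by rw [le_div_iff₀ hu₀]; linarith)
  have huℓu : u * log (1 / u) ≤ 1 := by
    have := log_le_sub_one_of_pos (one_div_pos.2 hu₀)
    have : u * (1 / u - 1) = 1 - u := by field_simp
    nlinarith
  set q := 1 + 2 * log (1 / u)
  have hlog : log (1 / s) ≤ log (1 / h) * q := by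
    rw [hsu, ← one_div_mul_one_div, log_mul (by positivity) (by positivity)]
    nlinarith
  have huq : u * q ≤ 3 := by nlinarith
  have hq : q ^ e ≤ q ^ (2 : ℕ) := by
    rw [← rpow_natCast]; exact rpow_le_rpow_of_exponent_le (by linarith) (by exact_mod_cast he₂)
  calc s ^ 2 * log (1 / s) ^ e ≤ s ^ 2 * (log (1 / h) * q) ^ e := by
        gcongr
        exact log_nonneg (by rw [le_div_iff₀ hs]; linarith)
    _ = h ^ 2 * log (1 / h) ^ e * (u ^ 2 * q ^ e) := by
        rw [mul_rpow (by linarith) (by linarith), hsu]; ring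
    _ ≤ h ^ 2 * log (1 / h) ^ e * (u * q) ^ 2 := by
        rw [mul_pow]; gcongr
    _ ≤ h ^ 2 * log (1 / h) ^ e * 3 ^ 2 := by gcongr
    _ = 9 * (h ^ 2 * log (1 / h) ^ e) := by ring

lemma sq_mul_logFactor_le {γ s h : ℝ} (hγ₀ : 0 ≤ γ) (hγ₂ : γ ≤ 2) (hs : 0 ≤ s) (hsh : s ≤ h)
    (hh : h ≤ 1 / 2) : s ^ 2 * logFactor γ s ≤ 9 * (h ^ 2 * logFactor γ h) := by
  have h₀ := sq_mul_log_rpow_le le_rfl zero_le_two hs hsh hh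
  have h₁ := sq_mul_log_rpow_le zero_le_one one_le_two hs hsh hh
  have hγ := sq_mul_log_rpow_le hγ₀ hγ₂ hs hsh hh
  simp only [rpow_zero, rpow_one] at h₀ h₁
  unfold logFactor
  linarith

noncomputable def taylorSum (g : ℝ → ℝ) (n : ℕ) (x t : ℝ) : ℝ :=
  ∑ k ∈ Finset.range (n + 1), deriv^[k] g x * t ^ k / k !

lemma taylorSum_zero_right (g : ℝ → ℝ) (n : ℕ) (x : ℝ) : taylorSum g n x 0 = g x := by
  simp [taylorSum, Finset.sum_range_succ', zero_pow_eq]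

lemma hasDerivAt_taylorSum_succ (g : ℝ → ℝ) (n : ℕ) (x t : ℝ) :
    HasDerivAt (taylorSum g (n + 1) x) (taylorSum (deriv g) n x t) t := by
  have hterm : ∀ k : ℕ, HasDerivAt (fun t ↦ deriv^[k + 1] g x * t ^ (k + 1) / (k + 1)!)
      (deriv^[k + 1] g x * t ^ k / k !) t := by
    intro k
    refine (((hasDerivAt_pow (k + 1) t).const_mul _).div_const _).congr_deriv ?_
    rw [Nat.factorial_succ]; push_cast; field_simp
  have hsplit : taylorSum g (n + 1) x = fun t ↦
      g x + ∑ k ∈ Finset.range (n + 1), deriv^[k + 1] g x * t ^ (k + 1) / (k + 1)! := by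
    ext t; rw [taylorSum, Finset.sum_range_succ']; simp [add_comm]
  rw [hsplit]
  refine ((HasDerivAt.fun_sum fun k _ ↦ hterm k).const_add (g x)).congr_deriv ?_
  simp only [taylorSum, Function.iterate_succ_apply]

lemma abs_le_of_abs_deriv_le_rpow {F F' : ℝ → ℝ} {c p : ℝ} (hp : 1 ≤ p)
    (hF : ∀ t, HasDerivAt F (F' t) t) (hF₀ : F 0 = 0) (hF' : ∀ t, |F' t| ≤ c * |t| ^ (p - 1))
    (t : ℝ) : |F t| ≤ c / p * |t| ^ p := by
  have key : ∀ {G G' : ℝ → ℝ}, (∀ t, HasDerivAt G (G' t) t) → G 0 = 0 →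
      (∀ t, |G' t| ≤ c * |t| ^ (p - 1)) → ∀ t, 0 ≤ t → |G t| ≤ c / p * t ^ p := by
    intro G G' hG hG₀ hG' t ht
    have hB : ∀ s, HasDerivAt (fun s ↦ c / p * s ^ p) (c * s ^ (p - 1)) s := fun s ↦ by
      refine ((hasDerivAt_rpow_const (Or.inr hp)).const_mul (c / p)).congr_deriv ?_
      field_simp [(by linarith : p ≠ 0)]
    refine image_norm_le_of_norm_deriv_right_le_deriv_boundary
      (fun s _ ↦ (hG s).continuousAt.continuousWithinAt) (fun s _ ↦ (hG s).hasDerivWithinAt)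
      (by simp [hG₀, zero_rpow (by linarith : p ≠ 0)]) hB (fun s hs ↦ ?_) ⟨ht, le_rfl⟩
    simpa [abs_of_nonneg hs.1] using hG' s
  rcases le_total 0 t with ht | ht
  · simpa [abs_of_nonneg ht] using key hF hF₀ hF' t ht
  · have hG : ∀ s, HasDerivAt (fun s ↦ F (-s)) (-F' (-s)) s := fun s ↦
      ((hF (-s)).comp s (hasDerivAt_neg s)).congr_deriv (by ring)
    simpa [abs_of_nonpos ht] using
      key hG (by simpa using hF₀) (fun s ↦ by simpa using hF' (-s)) (-t) (by linarith)

lemma abs_sub_taylorSum_le (n : ℕ) {β L : ℝ} {g : ℝ → ℝ} (hL : 0 ≤ L) (hnβ : n < β)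
    (hβn : β ≤ n + 1) (hdiff : ∀ k < n, Differentiable ℝ (deriv^[k] g))
    (hhold : ∀ t x, |deriv^[n] g (x + t) - deriv^[n] g x| ≤ L * |t| ^ (β - n)) (x t : ℝ) :
    |g (x + t) - taylorSum g n x t| ≤ L / n ! * |t| ^ β := by
  induction n generalizing β g t with
  | zero => simpa [taylorSum] using hhold t x
  | succ n ih =>
    push_cast at hnβ hβn hhold
    have hderiv : ∀ t, |deriv g (x + t) - taylorSum (deriv g) n x t| ≤ L / n ! * |t| ^ (β - 1) :=
      ih (by linarith) (by linarith)
        (fun k hk ↦ by simpa using hdiff (k + 1) (by omega))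
        (fun t x ↦ by simpa [sub_sub, add_comm] using hhold t x)
    have hg : Differentiable ℝ g := by simpa using hdiff 0 (by omega)
    have hF : ∀ s, HasDerivAt (fun s ↦ g (x + s) - taylorSum g (n + 1) x s)
        (deriv g (x + s) - taylorSum (deriv g) n x s) s := fun s ↦
      ((hg (x + s)).hasDerivAt.comp_const_add x s).sub (hasDerivAt_taylorSum_succ g n x s)
    have hfac : L / n ! / β ≤ L / (n + 1)! := by
      rw [div_div]
      refine div_le_div_of_nonneg_left hL (by positivity) ?_
      rw [Nat.factorial_succ]; push_cast
      nlinarith [(Nat.cast_pos.2 (Nat.factorial_pos n) : (0 : ℝ) < n !)]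
    calc |g (x + t) - taylorSum g (n + 1) x t| ≤ L / n ! / β * |t| ^ β :=
          abs_le_of_abs_deriv_le_rpow (by linarith) hF (by simp [taylorSum_zero_right]) hderiv t
      _ ≤ L / (n + 1)! * |t| ^ β := by gcongr

lemma flr_lt {b : ℝ} (hb : 0 < b) : (flr b : ℝ) < b :=
  Nat.lt_ceil.1 (Nat.sub_one_lt (Nat.ceil_pos.2 hb).ne')

lemma le_flr_add_one {b : ℝ} (hb : 0 < b) : b ≤ flr b + 1 := by
  have := Nat.le_ceil b
  rw [flr, Nat.cast_sub (Nat.one_le_ceil_iff.2 hb)]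
  push_cast
  linarith

lemma memHolder1.abs_le {β L : ℝ} {g : ℝ → ℝ} (hg : memHolder1 β L g) (x : ℝ) : |g x| ≤ L :=
  hg.1 0 (Nat.zero_le _) x

lemma memHolder1.abs_sub_taylorSum_le {β L : ℝ} {g : ℝ → ℝ} (hβ : 0 < β)
    (hg : memHolder1 β L g) (x t : ℝ) :
    |g (x + t) - taylorSum g (flr β) x t| ≤ L / (flr β)! * |t| ^ β :=
  _root_.abs_sub_taylorSum_le (flr β) ((abs_nonneg _).trans (hg.abs_le 0)) (flr_lt hβ)
    (le_flr_add_one hβ) hg.2.1 hg.2.2 x t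


lemma integrable_kernel_mul {K f : ℝ → ℝ} {MK c : ℝ} (hK_meas : Measurable K)
    (hK_bdd : ∀ z, |K z| ≤ MK) (hK_supp : Function.support K ⊆ Set.Icc (-1) 1)
    (hf : Measurable f) (hf_bdd : ∀ z ∈ Set.Icc (-1 : ℝ) 1, ‖f z‖ ≤ c) :
    Integrable (fun z ↦ K z * f z) := by
  refine (integrableOn_iff_integrable_of_support_subset
    ((Function.support_mul_subset_left _ _).trans hK_supp)).1 ?_
  refine Measure.integrableOn_of_bounded (M := MK * c) measure_Icc_lt_top.ne
    (hK_meas.mul hf).aestronglyMeasurable ?_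
  rw [ae_restrict_iff' measurableSet_Icc]
  refine .of_forall fun z hz ↦ ?_
  rw [norm_mul]
  exact mul_le_mul (hK_bdd z) (hf_bdd z hz) (norm_nonneg _) ((abs_nonneg _).trans (hK_bdd z))

lemma integrable_kernel_mul_of_continuous {K f : ℝ → ℝ} {MK : ℝ} (hK_meas : Measurable K)
    (hK_bdd : ∀ z, |K z| ≤ MK) (hK_supp : Function.support K ⊆ Set.Icc (-1) 1)
    (hf : Continuous f) : Integrable (fun z ↦ K z * f z) :=
  have ⟨_, hc⟩ := isCompact_Icc.exists_bound_of_continuousOn hf.continuousOn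
  integrable_kernel_mul hK_meas hK_bdd hK_supp hf.measurable hc

lemma continuous_taylorSum (g : ℝ → ℝ) (n : ℕ) (x : ℝ) : Continuous (taylorSum g n x) := by
  unfold taylorSum; fun_prop

lemma integral_kernel_mul_taylorSum {K : ℝ → ℝ} {MK : ℝ} {n : ℕ} (hK_meas : Measurable K)
    (hK_int : ∫ z, K z = 1) (hK_bdd : ∀ z, |K z| ≤ MK)
    (hK_supp : Function.support K ⊆ Set.Icc (-1) 1)
    (hK_mom : ∀ l : ℕ, 1 ≤ l → l ≤ n → ∫ z, K z * z ^ l = 0) (g : ℝ → ℝ) (x c : ℝ) :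
    ∫ z, K z * taylorSum g n x (c * z) = g x := by
  have hterm : ∀ k ∈ Finset.range (n + 1),
      ∫ z, deriv^[k] g x * c ^ k / k ! * (K z * z ^ k) = if k = 0 then g x else 0 := by
    intro k hk
    rw [integral_const_mul]
    rcases Nat.eq_zero_or_pos k with rfl | hk₀
    · simp [hK_int]
    · rw [hK_mom k hk₀ (by simpa [Nat.lt_succ_iff] using hk), if_neg hk₀.ne', mul_zero]
  calc ∫ z, K z * taylorSum g n x (c * z)
      = ∫ z, ∑ k ∈ Finset.range (n + 1), deriv^[k] g x * c ^ k / k ! * (K z * z ^ k) := by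
        congr 1; ext z
        rw [taylorSum, Finset.mul_sum]
        exact Finset.sum_congr rfl fun k _ ↦ by ring
    _ = g x := by
        rw [integral_finsetSum _ fun k _ ↦ (integrable_kernel_mul_of_continuous hK_meas hK_bdd
          hK_supp (continuous_pow k)).const_mul _, Finset.sum_congr rfl hterm]
        simp

noncomputable def kernelSmoothing (K : ℝ → ℝ) (h : ℝ) (g : ℝ → ℝ) (x : ℝ) : ℝ :=
  h⁻¹ * ∫ y, K ((x - y) / h) * g y

lemma kernelSmoothing_eq_integral (K g : ℝ → ℝ) (x : ℝ) {h : ℝ} (hh : 0 < h) :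
    kernelSmoothing K h g x = ∫ z, K z * g (x - h * z) := by
  calc kernelSmoothing K h g x = h⁻¹ * ∫ w, K (w / h) * g (x - w) := by
        rw [kernelSmoothing, ← integral_sub_left_eq_self _ volume x]; simp only [sub_sub_cancel]
    _ = ∫ z, K (h * z / h) * g (x - h * z) := by
        rw [Measure.integral_comp_mul_left (fun w ↦ K (w / h) * g (x - w)) h,
          abs_of_pos (inv_pos.2 hh), smul_eq_mul]
    _ = ∫ z, K z * g (x - h * z) := by simp_rw [mul_div_cancel_left₀ _ hh.ne']

lemma abs_kernelSmoothing_sub_le {K g : ℝ → ℝ} {MK B D β : ℝ} {n : ℕ}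
    (hK_meas : Measurable K) (hK_int : ∫ z, K z = 1) (hK_bdd : ∀ z, |K z| ≤ MK)
    (hK_supp : Function.support K ⊆ Set.Icc (-1) 1)
    (hK_mom : ∀ l : ℕ, 1 ≤ l → l ≤ n → ∫ z, K z * z ^ l = 0)
    (hg_meas : Measurable g) (hg_bdd : ∀ y, |g y| ≤ B) (hD : 0 ≤ D) (hβ : 0 ≤ β)
    (htaylor : ∀ x t, |g (x + t) - taylorSum g n x t| ≤ D * |t| ^ β) (x : ℝ) {h : ℝ}
    (hh : 0 < h) : |kernelSmoothing K h g x - g x| ≤ 2 * MK * D * h ^ β := by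
  have hMK : 0 ≤ MK := (abs_nonneg _).trans (hK_bdd 0)
  have hbound : ∀ z, ‖K z * g (x - h * z) - K z * taylorSum g n x (-h * z)‖
      ≤ (Set.Icc (-1 : ℝ) 1).indicator (fun _ ↦ MK * D * h ^ β) z := by
    intro z
    by_cases hz : z ∈ Set.Icc (-1 : ℝ) 1
    · have hhz : |-h * z| ≤ h := by
        rw [abs_mul, abs_neg, abs_of_pos hh]
        exact mul_le_of_le_one_right hh.le (abs_le.2 hz)
      rw [Set.indicator_of_mem hz, ← mul_sub, norm_mul, Real.norm_eq_abs, Real.norm_eq_abs,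
        mul_assoc]
      have htaylor_z := htaylor x (-h * z)
      rw [show x + -h * z = x - h * z by ring] at htaylor_z
      exact mul_le_mul (hK_bdd z) (htaylor_z.trans (by gcongr)) (abs_nonneg _) hMK
    · have : K z = 0 := Function.notMem_support.1 fun h ↦ hz (hK_supp h)
      simp [this, Set.indicator_of_notMem hz]
  have hint_g : Integrable fun z ↦ K z * g (x - h * z) :=
    integrable_kernel_mul hK_meas hK_bdd hK_supp (hg_meas.comp (by fun_prop)) (c := B)
      fun z _ ↦ hg_bdd _
  have hint_taylor : Integrable fun z ↦ K z * taylorSum g n x (-h * z) :=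
    integrable_kernel_mul_of_continuous hK_meas hK_bdd hK_supp
      ((continuous_taylorSum g n x).comp (continuous_const_mul _))
  rw [kernelSmoothing_eq_integral K g x hh,
    ← integral_kernel_mul_taylorSum hK_meas hK_int hK_bdd hK_supp hK_mom g x (-h),
    ← integral_sub hint_g hint_taylor]
  calc _ ≤ ∫ z, (Set.Icc (-1 : ℝ) 1).indicator (fun _ ↦ MK * D * h ^ β) z :=
        norm_integral_le_of_norm_le
          ((integrableOn_const measure_Icc_lt_top.ne).integrable_indicator measurableSet_Icc)
          (.of_forall hbound)
    _ = 2 * MK * D * h ^ β := by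
        rw [integral_indicator_const _ measurableSet_Icc, measureReal_def, Real.volume_Icc]
        norm_num
        ring

section TimeIntegral

variable {Ω : Type*}

noncomputable def timeIntegral (X : ℝ → Ω → ℝ) (f : ℝ → ℝ) (T : ℝ) (ω : Ω) : ℝ :=
  ∫ t in Set.Icc 0 T, f (X t ω)

noncomputable def kernelEstimator (X : ℝ → Ω → ℝ) (K : ℝ → ℝ) (T h x : ℝ) (ω : Ω) : ℝ :=
  1 / (T * h) * ∫ u in Set.Icc 0 T, K ((x - X u ω) / h)

lemma abs_timeIntegral_le {X : ℝ → Ω → ℝ} {f : ℝ → ℝ} {Mf T : ℝ} (hf_bdd : ∀ y, |f y| ≤ Mf)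
    (hT : 0 ≤ T) (ω : Ω) : |timeIntegral X f T ω| ≤ Mf * T := by
  have := norm_setIntegral_le_of_norm_le_const (μ := volume) measure_Icc_lt_top
    (fun t (_ : t ∈ Set.Icc 0 T) ↦ (Real.norm_eq_abs _).trans_le (hf_bdd (X t ω)))
  rwa [measureReal_def, Real.volume_Icc, sub_zero, ENNReal.toReal_ofReal hT] at this

variable [MeasurableSpace Ω]

def IsStationaryProcess (P : Measure Ω) (X : ℝ → Ω → ℝ) : Prop :=
  ∀ (n : ℕ) (t : Fin n → ℝ) (s : ℝ), 0 ≤ s → (∀ i, 0 ≤ t i) →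
    P.map (fun ω i => X (t i + s) ω) = P.map (fun ω i => X (t i) ω)

variable {X : ℝ → Ω → ℝ} {f g : ℝ → ℝ} {Mf Mg T : ℝ}

lemma map_eq_map_zero_of_isStationaryProcess {P : Measure Ω} (hX : Measurable (Function.uncurry X))
    (hstat : IsStationaryProcess P X) {u : ℝ} (hu : 0 ≤ u) : P.map (X u) = P.map (X 0) := by
  have hXt (t : ℝ) : Measurable fun ω (_ : Fin 1) ↦ X t ω :=
    measurable_pi_lambda _ fun _ ↦ hX.comp (measurable_const.prodMk measurable_id)
  have hev : Measurable fun v : Fin 1 → ℝ ↦ v 0 := measurable_pi_apply 0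
  have h := congrArg (Measure.map fun v : Fin 1 → ℝ ↦ v 0) (hstat 1 0 u hu fun _ ↦ le_rfl)
  simp only [Pi.zero_apply, zero_add] at h
  rwa [Measure.map_map hev (hXt u), Measure.map_map hev (hXt 0)] at h

lemma integral_comp_eq_integral_mul_density {P : Measure Ω} {Y : Ω → ℝ} {μ : ℝ → ℝ}
    (hY : Measurable Y) (hμ_meas : Measurable μ) (hμ_nonneg : ∀ y, 0 ≤ μ y)
    (hY_law : P.map Y = volume.withDensity fun y ↦ ENNReal.ofReal (μ y)) (hf : Measurable f) :
    ∫ ω, f (Y ω) ∂P = ∫ y, f y * μ y := by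
  rw [← integral_map hY.aemeasurable hf.aestronglyMeasurable, hY_law,
    integral_withDensity_eq_integral_toReal_smul (by fun_prop)
      (.of_forall fun _ ↦ ENNReal.ofReal_lt_top)]
  simp_rw [ENNReal.toReal_ofReal (hμ_nonneg _), smul_eq_mul, mul_comm]

lemma integrableOn_comp_path (hX : Measurable (Function.uncurry X)) (hf : Measurable f)
    (hf_bdd : ∀ y, |f y| ≤ Mf) (T : ℝ) (ω : Ω) :
    IntegrableOn (fun t ↦ f (X t ω)) (Set.Icc 0 T) :=
  Measure.integrableOn_of_bounded (M := Mf) measure_Icc_lt_top.ne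
    (hf.comp (hX.comp (measurable_id.prodMk measurable_const))).aestronglyMeasurable
    (.of_forall fun _ ↦ hf_bdd _)

lemma stronglyMeasurable_timeIntegral (hX : Measurable (Function.uncurry X)) (hf : Measurable f)
    (T : ℝ) : StronglyMeasurable (timeIntegral X f T) :=
  (hf.comp (hX.comp measurable_swap)).stronglyMeasurable.integral_prod_right'

lemma memLp_timeIntegral (P : Measure Ω) [IsFiniteMeasure P] (hX : Measurable (Function.uncurry X))
    (hf : Measurable f) (hf_bdd : ∀ y, |f y| ≤ Mf) (hT : 0 ≤ T) (p : ℝ≥0∞) :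
    MemLp (timeIntegral X f T) p P :=
  .of_bound (stronglyMeasurable_timeIntegral hX hf T).aestronglyMeasurable _
    (.of_forall (abs_timeIntegral_le hf_bdd hT))

lemma timeIntegral_add (hX : Measurable (Function.uncurry X)) (hf : Measurable f)
    (hg : Measurable g) (hf_bdd : ∀ y, |f y| ≤ Mf) (hg_bdd : ∀ y, |g y| ≤ Mg) (T : ℝ) :
    timeIntegral X (f + g) T = timeIntegral X f T + timeIntegral X g T := by
  ext ω
  exact integral_add (integrableOn_comp_path hX hf hf_bdd T ω)
    (integrableOn_comp_path hX hg hg_bdd T ω)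

lemma integral_timeIntegral {P : Measure Ω} [IsProbabilityMeasure P] {μ : ℝ → ℝ}
    (hX : Measurable (Function.uncurry X)) (hstat : IsStationaryProcess P X)
    (hμ_meas : Measurable μ) (hμ_nonneg : ∀ y, 0 ≤ μ y)
    (hμ_density : P.map (X 0) = volume.withDensity fun y ↦ ENNReal.ofReal (μ y))
    (hf : Measurable f) (hf_bdd : ∀ y, |f y| ≤ Mf) (hT : 0 ≤ T) :
    ∫ ω, timeIntegral X f T ω ∂P = T * ∫ y, f y * μ y := by
  have hF : Integrable (Function.uncurry fun ω t ↦ f (X t ω))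
      (P.prod (volume.restrict (Set.Icc 0 T))) :=
    .of_bound (hf.comp (hX.comp measurable_swap)).aestronglyMeasurable Mf
      (.of_forall fun _ ↦ hf_bdd _)
  have hmarginal : ∀ t ∈ Set.Icc 0 T, ∫ ω, f (X t ω) ∂P = ∫ y, f y * μ y := fun t ht ↦
    integral_comp_eq_integral_mul_density (hX.comp (measurable_const.prodMk measurable_id))
      hμ_meas hμ_nonneg ((map_eq_map_zero_of_isStationaryProcess hX hstat ht.1).trans hμ_density) hf
  unfold timeIntegral
  rw [integral_integral_swap hF, setIntegral_congr_fun measurableSet_Icc hmarginal,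
    setIntegral_const, measureReal_def, Real.volume_Icc, sub_zero, ENNReal.toReal_ofReal hT,
    smul_eq_mul]

lemma variance_add_le {P : Measure Ω} [IsFiniteMeasure P] {Y Z : Ω → ℝ} (hY : MemLp Y 2 P)
    (hZ : MemLp Z 2 P) : Var[Y + Z; P] ≤ 2 * Var[Y; P] + 2 * Var[Z; P] := by
  have := variance_nonneg (Y - Z) P
  rw [variance_sub hY hZ] at this
  rw [variance_add hY hZ]
  linarith

lemma integral_sq_const_mul_sub {P : Measure Ω} [IsProbabilityMeasure P] {Y : Ω → ℝ}
    (hY : MemLp Y 2 P) (c m : ℝ) :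
    ∫ ω, (c * Y ω - m) ^ 2 ∂P = c ^ 2 * Var[Y; P] + (c * P[Y] - m) ^ 2 := by
  have hZ : MemLp (fun ω ↦ c * Y ω - m) 2 P := (hY.const_mul c).sub (memLp_const m)
  have hvar := variance_eq_sub hZ
  rw [variance_sub_const (hY.const_mul c).aestronglyMeasurable, variance_const_mul,
    integral_sub ((hY.integrable one_le_two).const_mul c) (integrable_const m),
    integral_const_mul, integral_const, probReal_univ, one_smul] at hvar
  rw [hvar]
  simp only [Pi.pow_apply]
  ring

def HasSmallSupportVarianceBound (P : Measure Ω) (X : ℝ → Ω → ℝ) (γ C₀ : ℝ) : Prop :=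
  ∀ T > (0 : ℝ), ∀ f : ℝ → ℝ, ∀ Mf : ℝ,
    Measurable f → (∀ x, |f x| ≤ Mf) → volume (Function.support f) < 1 →
    (∫ ω, (timeIntegral X f T ω - ∫ ω', timeIntegral X f T ω' ∂P) ^ 2 ∂P)
      ≤ C₀ * T * Mf ^ 2 * (volume (Function.support f)).toReal ^ 2 *
        logFactor γ (volume (Function.support f)).toReal

variable {P : Measure Ω} {γ C₀ h : ℝ}

lemma variance_timeIntegral_le_of_volume_support_le (hvar : HasSmallSupportVarianceBound P X γ C₀)
    (hX : Measurable (Function.uncurry X)) (hγ₀ : 0 ≤ γ) (hγ₂ : γ ≤ 2) (hf : Measurable f)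
    (hf_bdd : ∀ y, |f y| ≤ Mf) (hh₀ : 0 < h) (hh : h ≤ 1 / 2)
    (hsupp : volume (Function.support f) ≤ ENNReal.ofReal h) (hT : 0 < T) :
    Var[timeIntegral X f T; P] ≤ 9 * max C₀ 0 * T * Mf ^ 2 * (h ^ 2 * logFactor γ h) := by
  set s := (volume (Function.support f)).toReal
  have hs₀ : 0 ≤ s := ENNReal.toReal_nonneg
  have hsh : s ≤ h := ENNReal.toReal_le_of_le_ofReal hh₀.le hsupp
  have hlt : volume (Function.support f) < 1 :=
    hsupp.trans_lt (ENNReal.ofReal_lt_one.2 (by linarith))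
  rw [variance_eq_integral (stronglyMeasurable_timeIntegral hX hf T).aemeasurable]
  calc _ ≤ C₀ * T * Mf ^ 2 * s ^ 2 * logFactor γ s := hvar T hT f Mf hf hf_bdd hlt
    _ ≤ max C₀ 0 * T * Mf ^ 2 * (s ^ 2 * logFactor γ s) := by
        rw [mul_assoc _ (s ^ 2)]
        have := logFactor_nonneg γ hs₀ (by linarith)
        gcongr
        exact le_max_left _ _
    _ ≤ max C₀ 0 * T * Mf ^ 2 * (9 * (h ^ 2 * logFactor γ h)) := by
        have : 0 ≤ max C₀ 0 := le_max_right _ _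
        exact mul_le_mul_of_nonneg_left (sq_mul_logFactor_le hγ₀ hγ₂ hs₀ hsh hh) (by positivity)
    _ = 9 * max C₀ 0 * T * Mf ^ 2 * (h ^ 2 * logFactor γ h) := by ring

/-- Splitting `f` at `x` gives two pieces whose supports have measure `≤ h < 1`,
as the small-support variance bound requires. -/
lemma variance_timeIntegral_le_of_support_subset_Icc [IsFiniteMeasure P]
    (hvar : HasSmallSupportVarianceBound P X γ C₀) (hX : Measurable (Function.uncurry X))
    (hγ₀ : 0 ≤ γ) (hγ₂ : γ ≤ 2) (hf : Measurable f) (hf_bdd : ∀ y, |f y| ≤ Mf) {x : ℝ}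
    (hh₀ : 0 < h) (hh : h ≤ 1 / 2) (hsupp : Function.support f ⊆ Set.Icc (x - h) (x + h))
    (hT : 0 < T) :
    Var[timeIntegral X f T; P] ≤ 36 * max C₀ 0 * T * Mf ^ 2 * (h ^ 2 * logFactor γ h) := by
  set fL := (Set.Iic x).indicator f
  set fR := (Set.Iic x)ᶜ.indicator f
  have hbdd : ∀ s : Set ℝ, ∀ y, |s.indicator f y| ≤ Mf := fun s y ↦ by
    simpa only [Real.norm_eq_abs] using (norm_indicator_le_norm_self f y).trans (hf_bdd y)
  have hmeas : Measurable fL ∧ Measurable fR :=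
    ⟨hf.indicator measurableSet_Iic, hf.indicator measurableSet_Iic.compl⟩
  have hvolL : volume (Function.support fL) ≤ ENNReal.ofReal h := by
    calc _ ≤ volume (Set.Icc (x - h) x) := measure_mono fun y hy ↦ by
          rw [Set.support_indicator] at hy
          exact ⟨(hsupp hy.2).1, hy.1⟩
      _ = ENNReal.ofReal h := by rw [Real.volume_Icc]; ring_nf
  have hvolR : volume (Function.support fR) ≤ ENNReal.ofReal h := by
    calc _ ≤ volume (Set.Icc x (x + h)) := measure_mono fun y hy ↦ by
          rw [Set.support_indicator, Set.compl_Iic] at hy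
          exact ⟨hy.1.le, (hsupp hy.2).2⟩
      _ = ENNReal.ofReal h := by rw [Real.volume_Icc]; ring_nf
  have hL := variance_timeIntegral_le_of_volume_support_le (P := P) hvar hX hγ₀ hγ₂ hmeas.1
    (hbdd _) hh₀ hh hvolL hT
  have hR := variance_timeIntegral_le_of_volume_support_le (P := P) hvar hX hγ₀ hγ₂ hmeas.2
    (hbdd _) hh₀ hh hvolR hT
  have hsum := variance_add_le (P := P) (memLp_timeIntegral P hX hmeas.1 (hbdd _) hT.le 2)
    (memLp_timeIntegral P hX hmeas.2 (hbdd _) hT.le 2)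
  rw [← timeIntegral_add hX hmeas.1 hmeas.2 (hbdd _) (hbdd _), Set.indicator_self_add_compl]
    at hsum
  linarith

lemma integral_kernelEstimator [IsProbabilityMeasure P] {μ K : ℝ → ℝ} {MK : ℝ}
    (hX : Measurable (Function.uncurry X)) (hstat : IsStationaryProcess P X)
    (hμ_meas : Measurable μ) (hμ_nonneg : ∀ y, 0 ≤ μ y)
    (hμ_density : P.map (X 0) = volume.withDensity fun y ↦ ENNReal.ofReal (μ y))
    (hK_meas : Measurable K) (hK_bdd : ∀ z, |K z| ≤ MK) (x : ℝ) (hT : 0 < T) :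
    ∫ ω, kernelEstimator X K T h x ω ∂P = kernelSmoothing K h μ x := by
  change ∫ ω, 1 / (T * h) * timeIntegral X (fun y ↦ K ((x - y) / h)) T ω ∂P = _
  rw [integral_const_mul, integral_timeIntegral (f := fun y ↦ K ((x - y) / h)) hX hstat hμ_meas
    hμ_nonneg hμ_density (hK_meas.comp (by fun_prop)) (fun _ ↦ hK_bdd _) hT.le, kernelSmoothing]
  field_simp

theorem integral_sq_kernelEstimator_sub_le [IsProbabilityMeasure P] {μ K : ℝ → ℝ}
    {B D β MK : ℝ} {n : ℕ} (hX : Measurable (Function.uncurry X))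
    (hstat : IsStationaryProcess P X) (hμ_meas : Measurable μ) (hμ_nonneg : ∀ y, 0 ≤ μ y)
    (hμ_bdd : ∀ y, |μ y| ≤ B)
    (hμ_density : P.map (X 0) = volume.withDensity fun y ↦ ENNReal.ofReal (μ y))
    (hD : 0 ≤ D) (hβ : 0 ≤ β) (htaylor : ∀ x t, |μ (x + t) - taylorSum μ n x t| ≤ D * |t| ^ β)
    (hK_meas : Measurable K) (hK_int : ∫ z, K z = 1) (hK_bdd : ∀ z, |K z| ≤ MK)
    (hK_supp : Function.support K ⊆ Set.Icc (-1) 1)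
    (hK_mom : ∀ l : ℕ, 1 ≤ l → l ≤ n → ∫ z, K z * z ^ l = 0)
    (hvar : HasSmallSupportVarianceBound P X γ C₀) (hγ₀ : 0 ≤ γ) (hγ₂ : γ ≤ 2)
    (x : ℝ) (hT : 0 < T) (hh₀ : 0 < h) (hh : h ≤ 1 / 2) :
    ∫ ω, (kernelEstimator X K T h x ω - μ x) ^ 2 ∂P
      ≤ ((2 * MK * D) ^ 2 + 36 * max C₀ 0 * MK ^ 2) * (h ^ (2 * β) + T⁻¹ * logFactor γ h) := by
  set f : ℝ → ℝ := fun y ↦ K ((x - y) / h)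
  have hf : Measurable f := hK_meas.comp (by fun_prop)
  have hf_bdd : ∀ y, |f y| ≤ MK := fun y ↦ hK_bdd _
  have hf_supp : Function.support f ⊆ Set.Icc (x - h) (x + h) := fun y hy ↦ by
    have := hK_supp hy
    rw [Set.mem_Icc, le_div_iff₀ hh₀, div_le_iff₀ hh₀] at this
    constructor <;> linarith
  have hmean : 1 / (T * h) * P[timeIntegral X f T] = kernelSmoothing K h μ x := by
    rw [← integral_const_mul]
    exact integral_kernelEstimator hX hstat hμ_meas hμ_nonneg hμ_density hK_meas hK_bdd x hT
  have hbias := abs_kernelSmoothing_sub_le hK_meas hK_int hK_bdd hK_supp hK_mom hμ_meas hμ_bdd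
    hD hβ htaylor x hh₀
  have hvariance := variance_timeIntegral_le_of_support_subset_Icc hvar hX hγ₀ hγ₂ hf hf_bdd
    hh₀ hh hf_supp hT
  change ∫ ω, (1 / (T * h) * timeIntegral X f T ω - μ x) ^ 2 ∂P ≤ _
  rw [integral_sq_const_mul_sub (memLp_timeIntegral P hX hf hf_bdd hT.le 2), hmean]
  have hlog := logFactor_nonneg γ hh₀.le (by linarith)
  have hC₀ : 0 ≤ max C₀ 0 := le_max_right _ _
  have hsq : (h ^ β) ^ 2 = h ^ (2 * β) := by
    rw [← rpow_natCast, ← rpow_mul hh₀.le, mul_comm]; norm_num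
  calc _ ≤ (1 / (T * h)) ^ 2 * (36 * max C₀ 0 * T * MK ^ 2 * (h ^ 2 * logFactor γ h))
        + (2 * MK * D * h ^ β) ^ 2 :=
        add_le_add (mul_le_mul_of_nonneg_left hvariance (by positivity))
          (sq_le_sq' (abs_le.1 hbias).1 (abs_le.1 hbias).2)
    _ = (2 * MK * D) ^ 2 * h ^ (2 * β) + 36 * max C₀ 0 * MK ^ 2 * (T⁻¹ * logFactor γ h) := by
        rw [mul_pow, hsq]; field_simp; ring
    _ ≤ _ := by
        have : 0 ≤ (2 * MK * D) ^ 2 * (T⁻¹ * logFactor γ h) := by positivity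
        have : 0 ≤ 36 * max C₀ 0 * MK ^ 2 * h ^ (2 * β) := by positivity
        linarith

end TimeIntegral

lemma rpow_neg_le_half {a T : ℝ} (ha : 0 < a) (hT : 2 ^ (1 / a) ≤ T) : T ^ (-a) ≤ 1 / 2 := by
  have hT₀ : 0 < T := (rpow_pos_of_pos two_pos _).trans_le hT
  have : 2 ≤ T ^ a := by
    calc (2 : ℝ) = (2 ^ (1 / a)) ^ a := by
          rw [← rpow_mul zero_le_two, one_div_mul_cancel ha.ne', rpow_one]
      _ ≤ T ^ a := by gcongr
  rw [rpow_neg hT₀.le, one_div]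
  exact inv_anti₀ two_pos this

lemma rpow_neg_add_inv_mul_logFactor_le {a β γ T : ℝ} (ha₀ : 0 < a) (ha₁ : a ≤ 1)
    (haβ : 1 < 2 * a * β) (hγ₀ : 0 ≤ γ) (hT : exp 1 ≤ T) :
    (T ^ (-a)) ^ (2 * β) + T⁻¹ * logFactor γ (T ^ (-a)) ≤ 4 * (log T ^ max γ 1 / T) := by
  have hT₀ : 0 < T := (exp_pos 1).trans_le hT
  have hℓ : 1 ≤ log T := by rwa [le_log_iff_exp_le hT₀]
  have hℓm : 1 ≤ log T ^ max γ 1 := one_le_rpow hℓ (by positivity)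
  have hle_pow : ∀ e ≤ max γ 1, 0 ≤ e → (a * log T) ^ e ≤ log T ^ max γ 1 := fun e he he₀ ↦
    calc (a * log T) ^ e ≤ log T ^ e := by gcongr; nlinarith
      _ ≤ log T ^ max γ 1 := rpow_le_rpow_of_exponent_le hℓ he
  have hlog : log (1 / T ^ (-a)) = a * log T := by
    rw [one_div, ← rpow_neg hT₀.le, neg_neg, log_rpow hT₀]
  have hfactor : logFactor γ (T ^ (-a)) ≤ 3 * log T ^ max γ 1 := by
    have h₁ := hle_pow γ (le_max_left _ _) hγ₀
    have h₂ := hle_pow 1 (le_max_right _ _) zero_le_one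
    rw [rpow_one] at h₂
    rw [logFactor, hlog]
    linarith
  have hbias : (T ^ (-a)) ^ (2 * β) ≤ T⁻¹ := by
    rw [← rpow_mul hT₀.le, ← rpow_neg_one]
    exact rpow_le_rpow_of_exponent_le (by linarith [add_one_le_exp 1]) (by nlinarith)
  have hT_inv : 0 < T⁻¹ := inv_pos.2 hT₀
  rw [div_eq_mul_inv]
  nlinarith

theorem stmt16_general {Ω : Type*} [MeasurableSpace Ω] (P : Measure Ω) [IsProbabilityMeasure P]
    (α : ℝ) (hα : α ∈ Set.Ioo (0 : ℝ) 2)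
    (β L : ℝ) (hβ : 0 < β)
    (X : ℝ → Ω → ℝ)
    (hX : Measurable (Function.uncurry X))
    (hstat : ∀ (n : ℕ) (t : Fin n → ℝ) (s : ℝ), 0 ≤ s → (∀ i, 0 ≤ t i) →
      P.map (fun ω i => X (t i + s) ω) = P.map (fun ω i => X (t i) ω))
    (μ : ℝ → ℝ) (hμ_meas : Measurable μ)
    (hμ_nonneg : ∀ x, 0 ≤ μ x)
    (hμ_density : P.map (X 0) = volume.withDensity (fun x => ENNReal.ofReal (μ x)))
    (hμ_holder : memHolder1 β L μ)
    (C₀ : ℝ)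
    (hvar : ∀ T > (0 : ℝ), ∀ f : ℝ → ℝ, ∀ Mf : ℝ,
      Measurable f → (∀ x, |f x| ≤ Mf) → volume (Function.support f) < 1 →
      (∫ ω, ((∫ t in Set.Icc 0 T, f (X t ω))
          - ∫ ω', (∫ t in Set.Icc 0 T, f (X t ω')) ∂P) ^ 2 ∂P)
        ≤ C₀ * T * Mf ^ 2 * (volume (Function.support f)).toReal ^ 2 *
          (1 + Real.log (1 / (volume (Function.support f)).toReal) ^ (2 - (1 + α) / 2)
             + Real.log (1 / (volume (Function.support f)).toReal)))
    (K : ℝ → ℝ) (hK_meas : Measurable K) (hK_int : ∫ x, K x = 1)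
    (MK : ℝ) (hK_bdd : ∀ x, |K x| ≤ MK)
    (hK_supp : Function.support K ⊆ Set.Icc (-1) 1)
    (M : ℕ) (hM : β ≤ (M : ℝ))
    (hK_mom : ∀ l : ℕ, 1 ≤ l → l ≤ M → ∫ x, K x * x ^ l = 0) :
    ∃ C : ℝ,
      (∀ (x : ℝ) (T h : ℝ), 0 < T → h ∈ Set.Ioc (0 : ℝ) (1 / 2) →
        (∫ ω, ((1 / (T * h)) * (∫ u in Set.Icc 0 T, K ((x - X u ω) / h)) - μ x) ^ 2 ∂P)
          ≤ C * (h ^ (2 * β)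
            + T⁻¹ * (1 + Real.log (1 / h) ^ (2 - (1 + α) / 2) + Real.log (1 / h)))) ∧
      (∀ a ∈ Set.Ioc (0 : ℝ) 1, 2 * a * β > 1 →
        ∃ T₀ : ℝ, ∀ T ≥ T₀, ∀ x : ℝ,
          (∫ ω, ((1 / (T * T ^ (-a))) *
              (∫ u in Set.Icc 0 T, K ((x - X u ω) / T ^ (-a))) - μ x) ^ 2 ∂P)
            ≤ C * Real.log T ^ (max (2 - (1 + α) / 2) 1) / T) := by
  obtain ⟨hα₀, hα₂⟩ := hα
  have hγ₀ : 0 ≤ 2 - (1 + α) / 2 := by linarith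
  have hγ₂ : 2 - (1 + α) / 2 ≤ 2 := by linarith
  have hL : 0 ≤ L := (abs_nonneg _).trans (hμ_holder.abs_le 0)
  have hflrM : flr β ≤ M := by exact_mod_cast (flr_lt hβ).le.trans hM
  set C := (2 * MK * (L / (flr β)!)) ^ 2 + 36 * max C₀ 0 * MK ^ 2
  have hC : 0 ≤ C := by positivity
  have hrisk : ∀ x T h, 0 < T → 0 < h → h ≤ 1 / 2 →
      ∫ ω, (kernelEstimator X K T h x ω - μ x) ^ 2 ∂P
        ≤ C * (h ^ (2 * β) + T⁻¹ * logFactor (2 - (1 + α) / 2) h) := fun x T h hT hh₀ hh ↦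
    integral_sq_kernelEstimator_sub_le hX hstat hμ_meas hμ_nonneg hμ_holder.abs_le hμ_density
      (by positivity) hβ.le (hμ_holder.abs_sub_taylorSum_le hβ) hK_meas hK_int hK_bdd hK_supp
      (fun l hl₁ hl₂ ↦ hK_mom l hl₁ (hl₂.trans hflrM)) hvar hγ₀ hγ₂ x hT hh₀ hh
  refine ⟨4 * C, fun x T h hT hh ↦ (hrisk x T h hT hh.1 hh.2).trans ?_, fun a ha haβ ↦
    ⟨max (exp 1) (2 ^ (1 / a)), fun T hT x ↦ ?_⟩⟩
  · have := logFactor_nonneg (2 - (1 + α) / 2) hh.1.le (by linarith [hh.2])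
    exact mul_le_mul_of_nonneg_right (by linarith)
      (add_nonneg (rpow_nonneg hh.1.le _) (mul_nonneg (inv_nonneg.2 hT.le) this))
  · have hTe : exp 1 ≤ T := (le_max_left _ _).trans hT
    have hT₀ : 0 < T := (exp_pos 1).trans_le hTe
    calc _ ≤ C * ((T ^ (-a)) ^ (2 * β) + T⁻¹ * logFactor (2 - (1 + α) / 2) (T ^ (-a))) :=
          hrisk x T _ hT₀ (rpow_pos_of_pos hT₀ _)
            (rpow_neg_le_half ha.1 ((le_max_right _ _).trans hT))
      _ ≤ C * (4 * (log T ^ max (2 - (1 + α) / 2) 1 / T)) := by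
          gcongr; exact rpow_neg_add_inv_mul_logFactor_le ha.1 ha.2 haβ hγ₀ hTe
      _ = 4 * C * log T ^ max (2 - (1 + α) / 2) 1 / T := by ring

/-- Pointwise convergence rate for the kernel invariant-density
estimator, case `d = 1` with jump-activity index `α ∈ (0,2)`:
(i) `E|μ̂_{h,T}(x)-μ(x)|² ≤ C(h^{2β} + T⁻¹(1 + (log(1/h))^{2-(1+α)/2} + log(1/h)))`;
(ii) with `h = T^{-a}`, `2aβ > 1`, the risk is `≤ C (log T)^{max(2-(1+α)/2, 1)}/T`
for all large `T`. -/
theorem stmt16 {Ω : Type*} [MeasurableSpace Ω] (P : Measure Ω) [IsProbabilityMeasure P]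
    (α : ℝ) (hα : α ∈ Set.Ioo (0 : ℝ) 2)
    (β L : ℝ) (hβ : 0 < β) (hL : 0 < L)
    (X : ℝ → Ω → ℝ)
    (hX : Measurable (Function.uncurry X))
    (hstat : ∀ (n : ℕ) (t : Fin n → ℝ) (s : ℝ), 0 ≤ s → (∀ i, 0 ≤ t i) →
      P.map (fun ω i => X (t i + s) ω) = P.map (fun ω i => X (t i) ω))
    (μ : ℝ → ℝ) (hμ_meas : Measurable μ)
    (hμ_nonneg : ∀ x, 0 ≤ μ x) (Cμ : ℝ) (hμ_bdd : ∀ x, μ x ≤ Cμ)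
    (hμ_density : P.map (X 0) = volume.withDensity (fun x => ENNReal.ofReal (μ x)))
    (hμ_holder : memHolder1 β L μ)
    (C₀ : ℝ)
    (hvar : ∀ T > (0 : ℝ), ∀ f : ℝ → ℝ, ∀ Mf : ℝ,
      Measurable f → (∀ x, |f x| ≤ Mf) → volume (Function.support f) < 1 →
      (∫ ω, ((∫ t in Set.Icc 0 T, f (X t ω))
          - ∫ ω', (∫ t in Set.Icc 0 T, f (X t ω')) ∂P) ^ 2 ∂P)
        ≤ C₀ * T * Mf ^ 2 * (volume (Function.support f)).toReal ^ 2 *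
          (1 + Real.log (1 / (volume (Function.support f)).toReal) ^ (2 - (1 + α) / 2)
             + Real.log (1 / (volume (Function.support f)).toReal)))
    (K : ℝ → ℝ) (hK_meas : Measurable K) (hK_int : ∫ x, K x = 1)
    (MK : ℝ) (hK_bdd : ∀ x, |K x| ≤ MK)
    (hK_supp : Function.support K ⊆ Set.Icc (-1) 1)
    (M : ℕ) (hM : β ≤ (M : ℝ))
    (hK_mom : ∀ l : ℕ, 1 ≤ l → l ≤ M → ∫ x, K x * x ^ l = 0) :
    ∃ C : ℝ,
      (∀ (x : ℝ) (T h : ℝ), 0 < T → h ∈ Set.Ioc (0 : ℝ) (1 / 2) →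
        (∫ ω, ((1 / (T * h)) * (∫ u in Set.Icc 0 T, K ((x - X u ω) / h)) - μ x) ^ 2 ∂P)
          ≤ C * (h ^ (2 * β)
            + T⁻¹ * (1 + Real.log (1 / h) ^ (2 - (1 + α) / 2) + Real.log (1 / h)))) ∧
      (∀ a ∈ Set.Ioc (0 : ℝ) 1, 2 * a * β > 1 →
        ∃ T₀ : ℝ, ∀ T ≥ T₀, ∀ x : ℝ,
          (∫ ω, ((1 / (T * T ^ (-a))) *
              (∫ u in Set.Icc 0 T, K ((x - X u ω) / T ^ (-a))) - μ x) ^ 2 ∂P)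
            ≤ C * Real.log T ^ (max (2 - (1 + α) / 2) 1) / T) :=
  stmt16_general P α hα β L hβ X hX hstat μ hμ_meas hμ_nonneg hμ_density hμ_holder C₀ hvar K hK_meas
    hK_int MK hK_bdd hK_supp M hM hK_mom
end
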